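/- arXiv:2011.10279 — 7 statements merged into one kernel-verified Lean document; each statement's English description precedes it below -/
import Mathlib

section
/- Let E ⊆ ℝⁿ be an arbitrary set, f : E → ℝ, G : E → ℝⁿ, and M > 0. Then the following are equivalent: (a) f(x) − f(y) − ⟨G(y), x − y⟩ ≥ (1/(2M))·|G(x) − G(y)|² for all x, y ∈ E; (b) f(z) + ⟨G(z), x − z⟩ ≤ f(y) + ⟨G(y), x − y⟩ + (M/2)·|x − y|² for all y, z ∈ E and all x ∈ ℝⁿ. -/
/-!
(a) ⇒ (b): the difference of the two sides of (b) splits into the left side of (a) at `(y, z)` and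
`⟪G z - G y, x - y⟫`, which Young's inequality bounds by `‖G z - G y‖² / (2M) + (M/2) ‖x - y‖²`.
(b) ⇒ (a): evaluate (b) at `x - M⁻¹ (G x - G y)`, the point where the quadratic upper bound centred
at `x` is tightest against the affine function through `y`.
-/

section

variable {F : Type*} [NormedAddCommGroup F] [InnerProductSpace ℝ F] {M : ℝ}

theorem real_inner_le_div_mul_sq_add_mul_sq (hM : 0 < M) (u v : F) :
    inner ℝ u v ≤ 1 / (2 * M) * ‖u‖ ^ 2 + M / 2 * ‖v‖ ^ 2 := by
  have hsq : 0 ≤ ‖u - M • v‖ ^ 2 := sq_nonneg _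
  rw [norm_sub_sq_real, real_inner_smul_right, norm_smul, Real.norm_of_nonneg hM.le] at hsq
  have hexpand : 1 / (2 * M) * ‖u‖ ^ 2 + M / 2 * ‖v‖ ^ 2 - inner ℝ u v
      = 1 / (2 * M) * (‖u‖ ^ 2 - 2 * (M * inner ℝ u v) + (M * ‖v‖) ^ 2) := by
    field_simp
    ring
  have : 0 ≤ 1 / (2 * M) * (‖u‖ ^ 2 - 2 * (M * inner ℝ u v) + (M * ‖v‖) ^ 2) := by positivity
  linarith

variable {f : F → ℝ} {G : F → F}

theorem tangent_le_quadratic_of_bregman_lower_bound (hM : 0 < M) {y z : F}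
    (h : f y - f z - inner ℝ (G z) (y - z) ≥ 1 / (2 * M) * ‖G y - G z‖ ^ 2) (x : F) :
    f z + inner ℝ (G z) (x - z) ≤ f y + inner ℝ (G y) (x - y) + M / 2 * ‖x - y‖ ^ 2 := by
  have hsplit : inner ℝ (G z) (x - z) - inner ℝ (G y) (x - y)
      = inner ℝ (G z) (y - z) + inner ℝ (G z - G y) (x - y) := by
    simp only [inner_sub_left, inner_sub_right]
    ring
  have hyoung := real_inner_le_div_mul_sq_add_mul_sq hM (G z - G y) (x - y)
  rw [norm_sub_rev] at hyoung
  linarith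

theorem bregman_lower_bound_of_tangent_le_quadratic (hM : 0 < M) {x y : F}
    (h : ∀ w, f y + inner ℝ (G y) (w - y) ≤ f x + inner ℝ (G x) (w - x) + M / 2 * ‖w - x‖ ^ 2) :
    f x - f y - inner ℝ (G y) (x - y) ≥ 1 / (2 * M) * ‖G x - G y‖ ^ 2 := by
  set d := G x - G y
  have hw := h (x - M⁻¹ • d)
  rw [show x - M⁻¹ • d - y = (x - y) - M⁻¹ • d by abel, sub_sub_cancel_left, inner_sub_right,
    inner_neg_right, norm_neg, norm_smul, real_inner_smul_right, real_inner_smul_right,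
    Real.norm_of_nonneg (inv_nonneg.mpr hM.le)] at hw
  have hd : M⁻¹ * inner ℝ (G x) d - M⁻¹ * inner ℝ (G y) d = M⁻¹ * ‖d‖ ^ 2 := by
    rw [← mul_sub, ← inner_sub_left, real_inner_self_eq_norm_sq]
  have hquad : M / 2 * (M⁻¹ * ‖d‖) ^ 2 = 1 / (2 * M) * ‖d‖ ^ 2 := by
    field_simp
  have hhalf : M⁻¹ * ‖d‖ ^ 2 - 1 / (2 * M) * ‖d‖ ^ 2 = 1 / (2 * M) * ‖d‖ ^ 2 := by
    field_simp
    ring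
  linarith

end

/-- equivalence of the two conditions in Lemma L1. -/
theorem lusin_stmt_1 {n : ℕ} (E : Set (EuclideanSpace ℝ (Fin n)))
    (f : EuclideanSpace ℝ (Fin n) → ℝ)
    (G : EuclideanSpace ℝ (Fin n) → EuclideanSpace ℝ (Fin n))
    (M : ℝ) (hM : 0 < M) :
    (∀ x ∈ E, ∀ y ∈ E,
        f x - f y - (inner ℝ (G y) (x - y) : ℝ) ≥ (1 / (2 * M)) * ‖G x - G y‖ ^ 2) ↔
      (∀ y ∈ E, ∀ z ∈ E, ∀ x : EuclideanSpace ℝ (Fin n),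
        f z + (inner ℝ (G z) (x - z) : ℝ) ≤
          f y + (inner ℝ (G y) (x - y) : ℝ) + (M / 2) * ‖x - y‖ ^ 2) :=
  ⟨fun ha y hy z hz => tangent_le_quadratic_of_bregman_lower_bound hM (ha y hy z hz),
    fun hb x hx y hy => bregman_lower_bound_of_tangent_le_quadratic hM (hb x hx y hy)⟩
end

section
/- Condition (b) of Lemma L1 implies condition (a): if f(z) + ⟨G(z), x − z⟩ ≤ f(y) + ⟨G(y), x − y⟩ + (M/2)·|x − y|² for all y, z ∈ E and all x ∈ ℝⁿ, then for all x, y ∈ E one has f(x) − f(y) − ⟨G(y), x − y⟩ ≥ (1/(2M))·|G(x) − G(y)|². The implication is proved by choosing ξ − x = (1/M)·(G(y) − G(x)). -/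
open Set

/-- `‖v‖ ^ 2 / (2 * M)` is the Fenchel conjugate of `(M / 2) * ‖·‖ ^ 2` at `v`, attained at
`d = M⁻¹ • v`. -/
theorem one_div_two_mul_mul_norm_sq_le_of_forall_inner_sub_le {F : Type*} [NormedAddCommGroup F]
    [InnerProductSpace ℝ F] {M a : ℝ} (hM : 0 < M) {v : F}
    (h : ∀ d : F, (inner ℝ v d : ℝ) - M / 2 * ‖d‖ ^ 2 ≤ a) :
    1 / (2 * M) * ‖v‖ ^ 2 ≤ a := by
  have hmax := h (M⁻¹ • v)
  rw [real_inner_smul_right, real_inner_self_eq_norm_sq, norm_smul, Real.norm_eq_abs,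
    abs_of_pos (inv_pos.mpr hM)] at hmax
  calc 1 / (2 * M) * ‖v‖ ^ 2 = M⁻¹ * ‖v‖ ^ 2 - M / 2 * (M⁻¹ * ‖v‖) ^ 2 := by
        field_simp; ring
    _ ≤ a := hmax

/-- condition (b) of Lemma L1 implies condition (a). -/
theorem lusin_stmt_2 {n : ℕ} (E : Set (EuclideanSpace ℝ (Fin n)))
    (f : EuclideanSpace ℝ (Fin n) → ℝ)
    (G : EuclideanSpace ℝ (Fin n) → EuclideanSpace ℝ (Fin n))
    (M : ℝ) (hM : 0 < M)
    (hb : ∀ y ∈ E, ∀ z ∈ E, ∀ x : EuclideanSpace ℝ (Fin n),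
        f z + (inner ℝ (G z) (x - z) : ℝ) ≤
          f y + (inner ℝ (G y) (x - y) : ℝ) + (M / 2) * ‖x - y‖ ^ 2) :
    ∀ x ∈ E, ∀ y ∈ E,
      f x - f y - (inner ℝ (G y) (x - y) : ℝ) ≥ (1 / (2 * M)) * ‖G x - G y‖ ^ 2 := by
  intro x hx y hy
  rw [norm_sub_rev]
  refine one_div_two_mul_mul_norm_sq_le_of_forall_inner_sub_le hM fun d => ?_
  have hξ := hb x hx y hy (x + d)
  rw [add_sub_cancel_left, add_sub_right_comm, inner_add_right] at hξ
  rw [inner_sub_left]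
  linarith
end

section
/- Let P : ℝⁿ → X be the orthogonal projection onto a proper nonzero linear subspace X of ℝⁿ (1 ≤ dim X ≤ n−1), let c : X → ℝ be convex, and define f(x) = c(P(x)). If g : ℝⁿ → ℝ is any convex function such that the set {x ∈ ℝⁿ : f(x) ≠ g(x)} has finite Lebesgue measure, then g = f everywhere on ℝⁿ. -/
/-!
A nonzero vector `v ⟂ X` exists, and `f` is constant along `v`. If the convex function `g`
increased by `δ > 0` over some step along `v`, then by continuity it would increase by `δ / 2`
over that step from every point of a small ball `B`; convexity then makes `g` grow linearly along
the rays from `B` in direction `v`, while `f` stays bounded there. So `f ≠ g` on all far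
translates of `B`, infinitely many disjoint balls of equal volume. Hence `g` is also constant
along `v`, the open set `{f ≠ g}` is invariant under translations along `v`, and if nonempty it
again contains infinitely many disjoint translates of a ball.
-/

open Set MeasureTheory Metric Function

section

variable {E : Type*} [NormedAddCommGroup E] [NormedSpace ℝ E]

lemma measure_eq_top_of_forall_add_smul_mem [MeasurableSpace E] [BorelSpace E]
    (μ : Measure E) [μ.IsAddHaarMeasure] {S : Set E} (x : E) (T₀ : ℝ) {w : E} {r : ℝ}
    (hw : w ≠ 0) (hr : 0 < r) (hS : ∀ t ≥ T₀, ∀ y ∈ ball x r, y + t • w ∈ S) :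
    μ S = ⊤ := by
  set a := 2 * r / ‖w‖
  have ha : 0 < a := by positivity
  set center : ℕ → E := fun i => x + (T₀ + a * i) • w
  have hdisj : Pairwise (Disjoint on fun i => ball (center i) r) := by
    refine (pairwise_disjoint_on _).2 fun i j hij => ball_disjoint_ball ?_
    have hij' : (i : ℝ) + 1 ≤ j := by exact_mod_cast hij
    have hdist : dist (center i) (center j) = 2 * r * (j - i) := by
      rw [dist_comm, dist_eq_norm, show center j - center i = (a * (j - i)) • w by
        simp only [center]; module, norm_smul, Real.norm_of_nonneg (by nlinarith)]
      simp only [a]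
      field_simp [norm_ne_zero_iff.2 hw]
    rw [hdist]
    nlinarith
  have hsub : (⋃ i, ball (center i) r) ⊆ S := by
    refine iUnion_subset fun i z hz => ?_
    have hmem := hS (T₀ + a * i) (le_add_of_nonneg_right (by positivity))
      (z - (T₀ + a * i) • w) (by rwa [mem_ball, dist_sub_eq_dist_add_left])
    rwa [sub_add_cancel] at hmem
  refine top_le_iff.1 (le_trans ?_ (measure_mono hsub))
  rw [measure_iUnion hdisj fun _ => measurableSet_ball]
  simp_rw [Measure.addHaar_ball_center μ _ r]
  exact (ENNReal.tsum_const_eq_top_of_ne_zero (measure_ball_pos μ 0 hr).ne').ge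

lemma ConvexOn.div_sub_le_div_sub_along_ray {g : E → ℝ} (hg : ConvexOn ℝ univ g) (x w : E)
    {s T : ℝ} (hs : 0 < s) (hsT : s ≤ T) :
    (g (x + s • w) - g x) / s ≤ (g (x + T • w) - g x) / T := by
  have hline : ConvexOn ℝ univ fun t : ℝ => g (x + t • w) := by
    simpa [comp_def, AffineMap.lineMap_apply_module', add_comm] using
      hg.comp_affineMap (AffineMap.lineMap x (x + w))
  simpa using hline.secant_mono (mem_univ 0) (mem_univ s) (mem_univ T) hs.ne'
    (hs.trans_le hsT).ne' hsT

end

section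

variable {E : Type*} [NormedAddCommGroup E] [NormedSpace ℝ E] [FiniteDimensional ℝ E]
  [MeasurableSpace E] [BorelSpace E] (μ : Measure E) [μ.IsAddHaarMeasure]
  {f g : E → ℝ} {w : E}

lemma ConvexOn.apply_add_smul_le_of_measure_ne_lt_top (hg : ConvexOn ℝ univ g)
    (hf : Continuous f) (hw : w ≠ 0) (hfw : ∀ x (t : ℝ), f (x + t • w) = f x)
    (hfin : μ {x | f x ≠ g x} < ⊤) (x : E) {s : ℝ} (hs : 0 < s) :
    g (x + s • w) ≤ g x := by
  by_contra! hlt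
  set δ := g (x + s • w) - g x
  have hδ : 0 < δ := sub_pos.2 hlt
  have hgc : Continuous g := continuousOn_univ.1 (hg.continuousOn isOpen_univ)
  have hstep : Continuous fun y => g (y + s • w) - g y :=
    (hgc.comp (continuous_add_const _)).sub hgc
  obtain ⟨ρ, hρ, hnear⟩ : ∃ ρ > 0, ∀ y ∈ ball x ρ,
      δ / 2 < g (y + s • w) - g y ∧ g x - 1 < g y ∧ f y < f x + 1 := by
    refine Metric.eventually_nhds_iff_ball.1 <|
      ((hstep.tendsto x).eventually (lt_mem_nhds ?_)).and <|
      ((hgc.tendsto x).eventually (lt_mem_nhds ?_)).and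
      ((hf.tendsto x).eventually (gt_mem_nhds ?_)) <;> linarith
  set T₀ := max s (2 * s * (f x + 2 - g x) / δ)
  refine hfin.ne <| measure_eq_top_of_forall_add_smul_mem μ x T₀ hw hρ fun T hT y hy => ?_
  obtain ⟨hslope, hgy, hfy⟩ := hnear y hy
  have hsT : s ≤ T := le_trans (le_max_left _ _) hT
  have hTδ : 2 * s * (f x + 2 - g x) ≤ T * δ :=
    (div_le_iff₀ hδ).1 (le_trans (le_max_right _ _) hT)
  have hgrow : δ / 2 / s < (g (y + T • w) - g y) / T :=
    (div_lt_div_of_pos_right hslope hs).trans_le (hg.div_sub_le_div_sub_along_ray y w hs hsT)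
  rw [div_lt_div_iff₀ hs (hs.trans_le hsT)] at hgrow
  have hgain : f x + 2 - g x < g (y + T • w) - g y :=
    lt_of_mul_lt_mul_left (by linarith) hs.le
  change f (y + T • w) ≠ g (y + T • w)
  rw [hfw]
  exact ne_of_lt (by linarith)

lemma ConvexOn.apply_add_smul_eq_of_measure_ne_lt_top (hg : ConvexOn ℝ univ g)
    (hf : Continuous f) (hw : w ≠ 0) (hfw : ∀ x (t : ℝ), f (x + t • w) = f x)
    (hfin : μ {x | f x ≠ g x} < ⊤) (x : E) (t : ℝ) : g (x + t • w) = g x := by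
  have hfw' : ∀ x (t : ℝ), f (x + t • -w) = f x := fun x t => by
    rw [smul_neg, ← neg_smul, hfw]
  have hfwd := hg.apply_add_smul_le_of_measure_ne_lt_top μ hf hw hfw hfin
  have hbwd := hg.apply_add_smul_le_of_measure_ne_lt_top μ hf (neg_ne_zero.2 hw) hfw' hfin
  rcases lt_trichotomy t 0 with ht | rfl | ht
  · refine le_antisymm ?_ ?_
    · simpa using hbwd x (neg_pos.2 ht)
    · simpa using hfwd (x + t • w) (neg_pos.2 ht)
  · simp
  · refine le_antisymm (hfwd x ht) ?_
    simpa using hbwd (x + t • w) ht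

theorem ConvexOn.eq_of_measure_ne_lt_top (hg : ConvexOn ℝ univ g)
    (hf : Continuous f) (hw : w ≠ 0) (hfw : ∀ x (t : ℝ), f (x + t • w) = f x)
    (hfin : μ {x | f x ≠ g x} < ⊤) : g = f := by
  by_contra! hne
  obtain ⟨x, hx⟩ := ne_iff.1 hne
  have hgc : Continuous g := continuousOn_univ.1 (hg.continuousOn isOpen_univ)
  obtain ⟨ε, hε, hball⟩ := Metric.isOpen_iff.1 (isOpen_ne_fun hf hgc) x (Ne.symm hx)
  refine hfin.ne <| measure_eq_top_of_forall_add_smul_mem μ x 0 hw hε fun t _ y hy => ?_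
  change f (y + t • w) ≠ g (y + t • w)
  rw [hfw, hg.apply_add_smul_eq_of_measure_ne_lt_top μ hf hw hfw hfin]
  exact hball hy

end

/-- if `f = c ∘ P` with `P` the orthogonal projection onto a proper nonzero
subspace `X` and `c` convex, and `g` is convex with `{f ≠ g}` of finite measure, then `g = f`. -/
theorem lusin_stmt_3 {n : ℕ} (X : Submodule ℝ (EuclideanSpace ℝ (Fin n)))
    (hX1 : 1 ≤ Module.finrank ℝ X) (hX2 : Module.finrank ℝ X ≤ n - 1)
    (c : X → ℝ) (hc : ConvexOn ℝ Set.univ c)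
    (f g : EuclideanSpace ℝ (Fin n) → ℝ)
    (hf : ∀ x, f x = c (X.orthogonalProjectionOnto x))
    (hg : ConvexOn ℝ Set.univ g)
    (hfin : volume {x : EuclideanSpace ℝ (Fin n) | f x ≠ g x} < ⊤) :
    ∀ x, g x = f x := by
  have hXperp : Xᗮ ≠ ⊥ := by
    intro h
    have hdim := X.finrank_add_finrank_orthogonal
    rw [h, finrank_bot, finrank_euclideanSpace_fin] at hdim
    omega
  obtain ⟨v, hvX, hv⟩ := Submodule.exists_mem_ne_zero_of_ne_bot hXperp
  have hfc : Continuous f := by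
    rw [funext hf]
    exact (continuousOn_univ.1 (hc.continuousOn isOpen_univ)).comp
      X.orthogonalProjectionOnto.continuous
  have hfv : ∀ x (t : ℝ), f (x + t • v) = f x := fun x t => by
    simp [hf, Submodule.orthogonalProjectionOnto_apply_of_mem_orthogonal hvX]
  exact congrFun (hg.eq_of_measure_ne_lt_top volume hfc hv hfv hfin)
end

section
/- Let f, g : ℝⁿ → ℝ be convex functions that are both differentiable at a point x, and suppose f = g on a measurable set E with x a Lebesgue density point of E. Then ∇f(x) = ∇g(x). Consequently, if f = g on a measurable set E, then ∇f = ∇g almost everywhere on E. -/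
/-!
At a Lebesgue density point `x` of `E`, the set `E` meets every small rescaled ball
`x + r • closedBall v ε`, so every vector `v` is a limit of secant directions `(y - x) / r` with
`y ∈ E`: the tangent cone of `E` at `x` is the whole space. Two functions that agree on `E` and are
differentiable at `x` have the same derivative along that tangent cone, hence the same derivative.
The almost-everywhere statement follows because almost every point of `E` is a density point, and
convex functions are locally Lipschitz, hence differentiable almost everywhere by Rademacher.
-/

open Set MeasureTheory Metric Filter Topology

theorem UniqueDiffWithinAt.fderiv_eq_of_eqOn {𝕜 E F : Type*} [NontriviallyNormedField 𝕜]
    [NormedAddCommGroup E] [NormedSpace 𝕜 E] [NormedAddCommGroup F] [NormedSpace 𝕜 F]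
    {f g : E → F} {s : Set E} {x : E} (hs : UniqueDiffWithinAt 𝕜 s x)
    (hf : DifferentiableAt 𝕜 f x) (hg : DifferentiableAt 𝕜 g x) (hfg : EqOn f g s) :
    fderiv 𝕜 f x = fderiv 𝕜 g x := by
  have : (𝓝[s] x).NeBot := mem_closure_iff_nhdsWithin_neBot.1 hs.mem_closure
  have hx : f x = g x :=
    tendsto_nhds_unique hf.continuousAt.continuousWithinAt
      (hg.continuousAt.continuousWithinAt.congr' (eventuallyEq_nhdsWithin_of_eqOn hfg).symm)
  rw [← hf.fderivWithin hs, ← hg.fderivWithin hs, fderivWithin_congr hfg hx]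

section FiniteDimensional

variable {E : Type*} [NormedAddCommGroup E] [NormedSpace ℝ E] [MeasurableSpace E] [BorelSpace E]
  [FiniteDimensional ℝ E] (μ : Measure E) [μ.IsAddHaarMeasure]

theorem tangentConeAt_eq_univ_of_density_one {s : Set E} {x : E}
    (h : Tendsto (fun r => μ (s ∩ closedBall x r) / μ (closedBall x r)) (𝓝[>] 0) (𝓝 1)) :
    tangentConeAt ℝ s x = univ := by
  refine eq_univ_of_forall fun v => ?_
  have hsecant : ∀ k : ℕ, ∃ r ∈ Ioo (0 : ℝ) (1 / (k + 1)),
      ∃ w ∈ closedBall v (1 / (k + 1)), x + r • w ∈ s := by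
    intro k
    have hε : (0 : ℝ) < 1 / (k + 1) := Nat.one_div_pos_of_nat
    obtain ⟨r, ⟨y, hys, hy⟩, hr⟩ := ((Measure.eventually_nonempty_inter_smul_of_density_one μ s x h _
      measurableSet_closedBall (measure_closedBall_pos μ v hε).ne').and (Ioo_mem_nhdsGT hε)).exists
    obtain ⟨_, rfl, _, ⟨w, hw, rfl⟩, rfl⟩ := hy
    exact ⟨r, hr, w, hw, hys⟩
  choose r hr w hw hws using hsecant
  have hr0 : Tendsto r atTop (𝓝 0) :=
    tendsto_of_tendsto_of_tendsto_of_le_of_le tendsto_const_nhds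
      tendsto_one_div_add_atTop_nhds_zero_nat (fun k => (hr k).1.le) (fun k => (hr k).2.le)
  have hwv : Tendsto w atTop (𝓝 v) :=
    tendsto_iff_dist_tendsto_zero.2 <|
      squeeze_zero (fun _ => dist_nonneg) hw tendsto_one_div_add_atTop_nhds_zero_nat
  refine mem_tangentConeAt_of_seq atTop (fun k => (r k)⁻¹) (fun k => r k • w k) ?_
    (Eventually.of_forall hws) ?_
  · simpa using hr0.smul hwv
  · refine hwv.congr fun k => ?_
    rw [smul_smul, inv_mul_cancel₀ (hr k).1.ne', one_smul]

theorem uniqueDiffWithinAt_of_density_one {s : Set E} {x : E}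
    (h : Tendsto (fun r => μ (s ∩ closedBall x r) / μ (closedBall x r)) (𝓝[>] 0) (𝓝 1)) :
    UniqueDiffWithinAt ℝ s x := by
  have hcone := tangentConeAt_eq_univ_of_density_one μ h
  refine ⟨?_, mem_closure_of_nonempty_tangentConeAt (hcone ▸ univ_nonempty)⟩
  simp [hcone]

theorem LocallyLipschitz.ae_differentiableAt {F : Type*} [NormedAddCommGroup F]
    [NormedSpace ℝ F] [FiniteDimensional ℝ F] {f : E → F} (hf : LocallyLipschitz f) :
    ∀ᵐ x ∂μ, DifferentiableAt ℝ f x := by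
  choose K t ht hlip using hf
  obtain ⟨c, hc, hcover⟩ := TopologicalSpace.countable_cover_nhds
    (f := fun x => interior (t x)) (fun x => interior_mem_nhds.2 (ht x))
  have hlocal : ∀ z ∈ c, ∀ᵐ x ∂μ, x ∈ interior (t z) → DifferentiableAt ℝ f x := by
    intro z _
    filter_upwards [(hlip z).ae_differentiableWithinAt_of_mem (μ := μ)] with x hx hxz
    exact (hx (interior_subset hxz)).differentiableAt (mem_interior_iff_mem_nhds.1 hxz)
  filter_upwards [(ae_ball_iff hc).2 hlocal] with x hx
  obtain ⟨z, hz, hxz⟩ := mem_iUnion₂.1 (hcover ▸ mem_univ x)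
  exact hx z hz hxz

end FiniteDimensional

theorem lusin_stmt_6_general {n : ℕ} (f g : EuclideanSpace ℝ (Fin n) → ℝ)
    (hf : ConvexOn ℝ Set.univ f) (hg : ConvexOn ℝ Set.univ g)
    (E : Set (EuclideanSpace ℝ (Fin n)))
    (heq : Set.EqOn f g E) :
    (∀ x : EuclideanSpace ℝ (Fin n),
        DifferentiableAt ℝ f x → DifferentiableAt ℝ g x →
        Tendsto (fun r : ℝ =>
            volume (E ∩ closedBall x r) / volume (closedBall x r)) (𝓝[>] 0) (𝓝 1) →
        fderiv ℝ f x = fderiv ℝ g x) ∧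
      (∀ᵐ x ∂volume, x ∈ E → fderiv ℝ f x = fderiv ℝ g x) := by
  refine ⟨fun x hfx hgx hx =>
    (uniqueDiffWithinAt_of_density_one volume hx).fderiv_eq_of_eqOn hfx hgx heq, ?_⟩
  filter_upwards [ae_imp_of_ae_restrict (Besicovitch.ae_tendsto_measure_inter_div volume E),
    hf.locallyLipschitz.ae_differentiableAt volume,
    hg.locallyLipschitz.ae_differentiableAt volume] with x hx hfx hgx hxE
  exact (uniqueDiffWithinAt_of_density_one volume (hx hxE)).fderiv_eq_of_eqOn hfx hgx heq

/-- two convex functions agreeing on a measurable set `E` have equal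
gradients at every density point of `E` where both are differentiable; consequently
their gradients agree a.e. on `E`. -/
theorem lusin_stmt_6 {n : ℕ} (f g : EuclideanSpace ℝ (Fin n) → ℝ)
    (hf : ConvexOn ℝ Set.univ f) (hg : ConvexOn ℝ Set.univ g)
    (E : Set (EuclideanSpace ℝ (Fin n))) (hE : MeasurableSet E)
    (heq : Set.EqOn f g E) :
    (∀ x : EuclideanSpace ℝ (Fin n),
        DifferentiableAt ℝ f x → DifferentiableAt ℝ g x →
        Tendsto (fun r : ℝ =>
            volume (E ∩ closedBall x r) / volume (closedBall x r)) (𝓝[>] 0) (𝓝 1) →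
        fderiv ℝ f x = fderiv ℝ g x) ∧
      (∀ᵐ x ∂volume, x ∈ E → fderiv ℝ f x = fderiv ℝ g x) :=
  lusin_stmt_6_general f g hf hg E heq
end

section
/- Let W ⊆ ℝⁿ be a closed convex set with 0 ∈ int(W) and μ its Minkowski functional. If μ⁻¹(0) contains no line, then μ is essentially coercive. (Together with the previous implications: W contains no line ⟺ ∂W contains no line ⟺ μ⁻¹(0) contains no line ⟺ μ is essentially coercive.) -/
/-!
The zero set of the gauge is a closed convex cone, and it is salient because it contains no
line. Its trace `K` on the unit sphere is compact and the convex hull of `K` is a compact convex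
set avoiding `0`, so Hahn–Banach gives a functional `ℓ` positive on `K`. Compactness of the
sphere then yields `t, ε > 0` with `ε ≤ gauge W + t ℓ` on the sphere, hence
`ε ‖x‖ ≤ gauge W x + t ℓ x` everywhere by homogeneity.
-/

open Set Filter Bornology Module Topology

theorem ConvexCone.Salient.convex_diff_zero {𝕜 M : Type*} [Field 𝕜] [LinearOrder 𝕜]
    [IsStrictOrderedRing 𝕜] [AddCommGroup M] [Module 𝕜 M] {C : ConvexCone 𝕜 M} (hC : C.Salient) :
    Convex 𝕜 ((C : Set M) \ {0}) := by
  rintro x ⟨hxC, hx0⟩ y ⟨hyC, hy0⟩ a b ha hb hab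
  refine ⟨C.convex hxC hyC ha hb hab, fun hzero => ?_⟩
  rcases ha.eq_or_lt with rfl | ha
  · simp_all
  rcases hb.eq_or_lt with rfl | hb
  · simp_all
  refine hC x hxC hx0 ?_
  have : -x = (b / a) • y := by
    rw [div_eq_inv_mul, mul_smul, eq_inv_smul_iff₀ ha.ne', smul_neg]
    exact (eq_neg_of_add_eq_zero_right hzero).symm
  exact this ▸ C.smul_mem (div_pos hb ha) hyC

section Gauge
variable {E : Type*} [AddCommGroup E] [Module ℝ E] {W : Set E}

def gaugeZeroCone (hW : Convex ℝ W) (habs : Absorbent ℝ W) : ConvexCone ℝ E where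
  carrier := {x | gauge W x = 0}
  smul_mem' c hc x hx := by
    change gauge W (c • x) = 0
    rw [gauge_smul_of_nonneg hc.le, show gauge W x = 0 from hx, smul_zero]
  add_mem' x hx y hy := le_antisymm
    ((gauge_add_le hW habs x y).trans_eq (by rw [hx, hy, add_zero])) (gauge_nonneg _)

theorem gaugeZeroCone_salient (hW : Convex ℝ W) (habs : Absorbent ℝ W)
    (hline : ∀ v ≠ 0, ¬ ∀ t : ℝ, gauge W (t • v) = 0) : (gaugeZeroCone hW habs).Salient := by
  intro x hx hx0 hnx
  refine hline x hx0 fun t => ?_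
  rcases le_total 0 t with ht | ht
  · rw [gauge_smul_of_nonneg ht, show gauge W x = 0 from hx, smul_zero]
  · rw [← neg_smul_neg, gauge_smul_of_nonneg (neg_nonneg.2 ht),
      show gauge W (-x) = 0 from hnx, smul_zero]

end Gauge

section FiniteDimensional
variable {E : Type*} [NormedAddCommGroup E] [NormedSpace ℝ E] [FiniteDimensional ℝ E]

theorem IsCompact.convexHull {K : Set E} (hK : IsCompact K) : IsCompact (convexHull ℝ K) := by
  -- by Carathéodory, the hull is a finite union of continuous images of `stdSimplex × Kᵏ`
  have hunion : _root_.convexHull ℝ K = ⋃ k : Fin (finrank ℝ E + 2),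
      (fun p : (Fin k → ℝ) × (Fin k → E) => ∑ i, p.1 i • p.2 i) ''
        (stdSimplex ℝ (Fin k) ×ˢ univ.pi fun _ => K) := by
    refine Subset.antisymm (fun x hx => ?_) (iUnion_subset fun k => ?_)
    · obtain ⟨ι, _, z, w, hzK, hind, hw0, hw1, rfl⟩ := eq_pos_convex_span_of_mem_convexHull hx
      have hcard : Fintype.card ι < finrank ℝ E + 2 :=
        Nat.lt_succ_of_le (hind.card_le_finrank_succ.trans
          (Nat.succ_le_succ (Submodule.finrank_le _)))
      let e := Fintype.equivFin ι
      refine mem_iUnion.2 ⟨⟨_, hcard⟩, ⟨(w ∘ e.symm, z ∘ e.symm), ⟨⟨fun i => (hw0 _).le, ?_⟩,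
        fun i _ => hzK (mem_range_self _)⟩, ?_⟩⟩
      · simpa [Function.comp] using (e.symm.sum_comp w).trans hw1
      · exact e.symm.sum_comp fun i => w i • z i
    · rintro _ ⟨⟨w, z⟩, ⟨⟨hw0, hw1⟩, hz⟩, rfl⟩
      exact mem_convexHull_of_exists_fintype w z hw0 hw1 (fun i => hz i (mem_univ i)) rfl
  rw [hunion]
  exact isCompact_iUnion fun k =>
    ((isCompact_stdSimplex _ _).prod (isCompact_univ_pi fun _ => hK)).image (by fun_prop)

theorem ConvexCone.Salient.exists_strongDual_pos {C : ConvexCone ℝ E} (hC : C.Salient)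
    (hCc : IsClosed (C : Set E)) : ∃ ℓ : StrongDual ℝ E, ∀ x ∈ C, x ≠ 0 → 0 < ℓ x := by
  set K := Metric.sphere (0 : E) 1 ∩ C
  have hKC : K ⊆ (C : Set E) \ {0} := fun x hx =>
    ⟨hx.2, by simpa using ne_zero_of_mem_unit_sphere ⟨x, hx.1⟩⟩
  have hhull : convexHull ℝ K ⊆ (C : Set E) \ {0} := convexHull_min hKC hC.convex_diff_zero
  obtain ⟨ℓ, u, hℓ0, hℓK⟩ := geometric_hahn_banach_point_closed (convex_convexHull ℝ K)
    ((isCompact_sphere 0 1).inter_right hCc).convexHull.isClosed fun h => (hhull h).2 rfl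
  refine ⟨ℓ, fun x hx hx0 => ?_⟩
  have hnx : 0 < ‖x‖ := norm_pos_iff.2 hx0
  have hxK : ‖x‖⁻¹ • x ∈ K := ⟨by simp [norm_smul, hnx.ne'], C.smul_mem (inv_pos.2 hnx) hx⟩
  have := hℓK _ (subset_convexHull ℝ K hxK)
  rw [map_zero] at hℓ0
  rw [map_smul, smul_eq_mul] at this
  exact (mul_pos_iff_of_pos_left (inv_pos.2 hnx)).1 (hℓ0.trans this)


section Coercive
variable {g : E → ℝ} (hg : Continuous g) (hg0 : ∀ x, 0 ≤ g x)
  {ℓ : StrongDual ℝ E} (hℓ : ∀ x, g x = 0 → x ≠ 0 → 0 < ℓ x)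
include hg hg0 hℓ

theorem exists_pos_add_mul_pos_on_sphere :
    ∃ t > 0, ∀ x ∈ Metric.sphere (0 : E) 1, 0 < g x + t * ℓ x := by
  set A := Metric.sphere (0 : E) 1 ∩ {x | ℓ x ≤ 0}
  have hA : IsCompact A :=
    (isCompact_sphere 0 1).inter_right (isClosed_le ℓ.continuous continuous_const)
  obtain ⟨δ, hδ, hgA⟩ := hA.exists_forall_le' hg.continuousOn fun x hx =>
    (hg0 x).lt_of_ne fun hgx => (hℓ x hgx.symm (ne_zero_of_mem_unit_sphere ⟨x, hx.1⟩)).not_ge hx.2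
  set t := δ / (‖ℓ‖ + 1)
  have ht : 0 < t := by positivity
  have htδ : t * (‖ℓ‖ + 1) = δ := div_mul_cancel₀ _ (by positivity)
  refine ⟨t, ht, fun x hx => ?_⟩
  rcases lt_or_ge 0 (ℓ x) with hℓx | hℓx
  · have := hg0 x
    positivity
  have hnorm : -‖ℓ‖ ≤ ℓ x := by
    have := ℓ.le_opNorm x
    rw [mem_sphere_zero_iff_norm.1 hx, mul_one, Real.norm_eq_abs] at this
    exact neg_le_of_abs_le this
  linarith [hgA x ⟨hx, hℓx⟩, mul_le_mul_of_nonneg_left hnorm ht.le]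

theorem exists_strongDual_mul_norm_le_sub (hsmul : ∀ c : ℝ, 0 ≤ c → ∀ x, g (c • x) = c * g x) :
    ∃ ℓ' : StrongDual ℝ E, ∃ ε > 0, ∀ x, ε * ‖x‖ ≤ g x - ℓ' x := by
  obtain ⟨t, -, hpos⟩ := exists_pos_add_mul_pos_on_sphere hg hg0 hℓ
  obtain ⟨ε, hε, hεS⟩ := (isCompact_sphere (0 : E) 1).exists_forall_le'
    (hg.add (continuous_const.mul ℓ.continuous)).continuousOn hpos
  refine ⟨-(t • ℓ), ε, hε, fun x => ?_⟩
  rcases eq_or_ne x 0 with rfl | hx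
  · simp [show g 0 = 0 by simpa using hsmul 0 le_rfl 0]
  have hnx : 0 < ‖x‖ := norm_pos_iff.2 hx
  have hxy : x = ‖x‖ • (‖x‖⁻¹ • x) := (smul_inv_smul₀ hnx.ne' x).symm
  calc ε * ‖x‖ ≤ (g (‖x‖⁻¹ • x) + t * ℓ (‖x‖⁻¹ • x)) * ‖x‖ :=
        mul_le_mul_of_nonneg_right (hεS _ (by simp [norm_smul, hnx.ne'])) hnx.le
    _ = g x - (-(t • ℓ)) x := by
        conv_rhs => rw [hxy]
        simp only [hsmul _ hnx.le, map_smul, neg_apply, smul_apply, smul_eq_mul]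
        ring

end Coercive

end FiniteDimensional

theorem lusin_stmt_12_general {n : ℕ} (W : Set (EuclideanSpace ℝ (Fin n)))
    (hWconv : Convex ℝ W) (h0 : (0 : EuclideanSpace ℝ (Fin n)) ∈ interior W)
    (hnoline : ∀ (x v : EuclideanSpace ℝ (Fin n)), v ≠ 0 →
      ¬ (∀ t : ℝ, gauge W (x + t • v) = 0)) :
    ∃ ℓ : EuclideanSpace ℝ (Fin n) →ₗ[ℝ] ℝ,
      Tendsto (fun x => gauge W x - ℓ x) (cobounded (EuclideanSpace ℝ (Fin n))) atTop := by
  have hW0 : W ∈ 𝓝 0 := mem_interior_iff_mem_nhds.1 h0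
  have habs : Absorbent ℝ W := absorbent_nhds_zero hW0
  have hcont : Continuous (gauge W) := continuous_gauge hWconv hW0
  have hsalient : (gaugeZeroCone hWconv habs).Salient :=
    gaugeZeroCone_salient hWconv habs fun v hv hline => hnoline 0 v hv (by simpa using hline)
  obtain ⟨ℓ, hℓ⟩ := hsalient.exists_strongDual_pos (isClosed_eq hcont continuous_const)
  obtain ⟨ℓ', ε, hε, hbound⟩ := exists_strongDual_mul_norm_le_sub hcont gauge_nonneg hℓ
    fun c hc x => gauge_smul_of_nonneg hc x
  exact ⟨ℓ', tendsto_atTop_mono hbound (tendsto_norm_cobounded_atTop.const_mul_atTop hε)⟩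

/-- if the zero set of the Minkowski functional of a closed convex set `W`
with `0 ∈ int W` contains no line, then the Minkowski functional is essentially coercive. -/
theorem lusin_stmt_12 {n : ℕ} (W : Set (EuclideanSpace ℝ (Fin n)))
    (hWc : IsClosed W) (hWconv : Convex ℝ W) (h0 : (0 : EuclideanSpace ℝ (Fin n)) ∈ interior W)
    (hnoline : ∀ (x v : EuclideanSpace ℝ (Fin n)), v ≠ 0 →
      ¬ (∀ t : ℝ, gauge W (x + t • v) = 0)) :
    ∃ ℓ : EuclideanSpace ℝ (Fin n) →ₗ[ℝ] ℝ,
      Tendsto (fun x => gauge W x - ℓ x) (cobounded (EuclideanSpace ℝ (Fin n))) atTop :=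
  lusin_stmt_12_general W hWconv h0 hnoline
end

section
/- Let f : ℝⁿ → ℝ be a convex function. Then for every measurable set A ⊆ ℝⁿ of finite Lebesgue measure and every ε > 0 there exists a convex function g : ℝⁿ → ℝ of class C^{1,1} (g is differentiable with globally Lipschitz gradient) such that 𝓛ⁿ({x ∈ A : f(x) ≠ g(x)}) < ε. -/
/-!
Outside a ball carrying most of `A`, `f` is replaced by its Pasch–Hausdorff envelope
`F = ⨅ y, f y + K ‖· - y‖`, which is convex, globally Lipschitz and equal to `f` on the ball.
The right derivative of a convex function of one variable is monotone, hence differentiable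
almost everywhere, which gives `F` a quadratic upper Taylor bound at almost every point of almost
every line. By Fubini, Rademacher and Jensen's inequality along an orthonormal basis, almost every
`x` then satisfies `F y ≤ F x + DF(x) (y - x) + m ‖y - x‖²` for all `y`, with one `m` off a set
of small measure. The Lasry–Lions regularisation of `F` (inf-convolution with `a ‖·‖²` of the
sup-convolution with `a ‖·‖²`) is convex and `C^{1,1}`, and for `a ≥ m` it agrees with `F` at
every such `x`, where `F` is squeezed between its tangent plane and that plane plus `a ‖· - x‖²`.
-/

open Set Filter Topology MeasureTheory Metric

noncomputable def infConv {E : Type*} [Sub E] (f ρ : E → ℝ) (x : E) : ℝ := ⨅ y, f y + ρ (x - y)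

section InfConv

variable {E : Type*} [AddCommGroup E] {f ρ : E → ℝ} {x : E}

lemma infConv_le (hb : BddBelow (range fun y ↦ f y + ρ (x - y))) (y : E) :
    infConv f ρ x ≤ f y + ρ (x - y) :=
  ciInf_le hb y

lemma le_infConv {c : ℝ} (h : ∀ y, c ≤ f y + ρ (x - y)) : c ≤ infConv f ρ x :=
  le_ciInf h

variable [Module ℝ E]

lemma convexOn_infConv (hf : ConvexOn ℝ univ f) (hρ : ConvexOn ℝ univ ρ)
    (hb : ∀ x, BddBelow (range fun y ↦ f y + ρ (x - y))) : ConvexOn ℝ univ (infConv f ρ) := by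
  refine ⟨convex_univ, fun x₁ _ x₂ _ a b ha hb' hab ↦ ?_⟩
  refine le_of_forall_pos_le_add fun δ hδ ↦ ?_
  obtain ⟨y₁, hy₁⟩ := exists_lt_of_ciInf_lt (lt_add_of_pos_right (infConv f ρ x₁) hδ)
  obtain ⟨y₂, hy₂⟩ := exists_lt_of_ciInf_lt (lt_add_of_pos_right (infConv f ρ x₂) hδ)
  have hsub : a • x₁ + b • x₂ - (a • y₁ + b • y₂) = a • (x₁ - y₁) + b • (x₂ - y₂) := by module
  calc infConv f ρ (a • x₁ + b • x₂)
      ≤ f (a • y₁ + b • y₂) + ρ (a • (x₁ - y₁) + b • (x₂ - y₂)) :=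
        hsub ▸ infConv_le (hb _) _
    _ ≤ (a * f y₁ + b * f y₂) + (a * ρ (x₁ - y₁) + b * ρ (x₂ - y₂)) :=
        add_le_add (hf.2 trivial trivial ha hb' hab) (hρ.2 trivial trivial ha hb' hab)
    _ = a * (f y₁ + ρ (x₁ - y₁)) + b * (f y₂ + ρ (x₂ - y₂)) := by ring
    _ ≤ a * (infConv f ρ x₁ + δ) + b * (infConv f ρ x₂ + δ) := by gcongr
    _ = a • infConv f ρ x₁ + b • infConv f ρ x₂ + δ := by
        simp only [smul_eq_mul]; linear_combination δ * hab

/-- `infConv f ρ x = ⨅ w, f (x - w) + ρ w` is an infimum of concave functions of `x`. -/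
lemma concaveOn_infConv (hf : ConcaveOn ℝ univ f)
    (hb : ∀ x, BddBelow (range fun y ↦ f y + ρ (x - y))) : ConcaveOn ℝ univ (infConv f ρ) := by
  refine ⟨convex_univ, fun x₁ _ x₂ _ a b ha hb' hab ↦ le_infConv fun y ↦ ?_⟩
  set w := a • x₁ + b • x₂ - y
  have h₁ := infConv_le (hb x₁) (x₁ - w)
  have h₂ := infConv_le (hb x₂) (x₂ - w)
  have hy : a • (x₁ - w) + b • (x₂ - w) = y := by
    calc a • (x₁ - w) + b • (x₂ - w) = a • x₁ + b • x₂ - (a + b) • w := by module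
      _ = y := by rw [hab, one_smul, sub_sub_cancel]
  rw [sub_sub_cancel] at h₁ h₂
  have hfy := hf.2 (mem_univ (x₁ - w)) (mem_univ (x₂ - w)) ha hb' hab
  rw [hy] at hfy
  have hw : (a + b) * ρ w = ρ w := by rw [hab, one_mul]
  simp only [smul_eq_mul] at hfy ⊢
  linarith [mul_le_mul_of_nonneg_left h₁ ha, mul_le_mul_of_nonneg_left h₂ hb']

end InfConv

section InfConvLipschitz

variable {E : Type*} [SeminormedAddCommGroup E] {f ρ : E → ℝ} {K : NNReal}

lemma lipschitzWith_infConv_of_left (hf : LipschitzWith K f)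
    (hb : ∀ x, BddBelow (range fun y ↦ f y + ρ (x - y))) : LipschitzWith K (infConv f ρ) := by
  refine LipschitzWith.of_le_add_mul K fun x x' ↦ ?_
  rw [← sub_le_iff_le_add]
  refine le_infConv fun y ↦ ?_
  have h := infConv_le (hb x) (y + (x - x'))
  have hf' := hf.le_add_mul (y + (x - x')) y
  rw [dist_eq_norm, add_sub_cancel_left, ← dist_eq_norm] at hf'
  rw [show x - (y + (x - x')) = x' - y by abel] at h
  linarith

lemma lipschitzWith_infConv_of_right (hρ : LipschitzWith K ρ)
    (hb : ∀ x, BddBelow (range fun y ↦ f y + ρ (x - y))) : LipschitzWith K (infConv f ρ) := by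
  refine LipschitzWith.of_le_add_mul K fun x x' ↦ ?_
  rw [← sub_le_iff_le_add]
  refine le_infConv fun y ↦ ?_
  have h := infConv_le (hb x) y
  have hρ' := hρ.le_add_mul (x - y) (x' - y)
  rw [dist_sub_right] at hρ'
  linarith

end InfConvLipschitz

section Truncation

variable {E : Type*} [NormedAddCommGroup E] {f : E → ℝ} {K : NNReal}

/-- Compare `f` on the segment from `x` to `y` with its value at a point of that segment close
to `x`. -/
lemma ConvexOn.le_add_mul_norm_of_lipschitzOnWith [NormedSpace ℝ E] (hf : ConvexOn ℝ univ f)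
    {U : Set E} {x : E} (hU : U ∈ 𝓝 x) (hfU : LipschitzOnWith K f U) (y : E) : f x ≤ f y + K * ‖x - y‖ := by
  have hseg : Tendsto (fun θ : ℝ ↦ x + θ • (y - x)) (𝓝[>] 0) (𝓝 x) := by
    have : Continuous fun θ : ℝ ↦ x + θ • (y - x) := by fun_prop
    simpa using (this.tendsto 0).mono_left nhdsWithin_le_nhds
  obtain ⟨θ, hθU, hθ⟩ := ((hseg.eventually hU).and (Ioo_mem_nhdsGT one_pos)).exists
  have hconv : f (x + θ • (y - x)) ≤ (1 - θ) * f x + θ * f y := by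
    have h := hf.2 (mem_univ x) (mem_univ y) (sub_nonneg.2 hθ.2.le) hθ.1.le (by ring)
    rwa [show (1 - θ) • x + θ • y = x + θ • (y - x) by module, smul_eq_mul, smul_eq_mul] at h
  have hlip : f x - f (x + θ • (y - x)) ≤ K * (θ * ‖x - y‖) := by
    have h := hfU.le_add_mul (mem_of_mem_nhds hU) hθU
    rwa [dist_eq_norm, sub_add_cancel_left, norm_neg, norm_smul, Real.norm_of_nonneg hθ.1.le,
      norm_sub_rev, ← sub_le_iff_le_add'] at h
  have key : θ * f x ≤ θ * (f y + K * ‖x - y‖) := by nlinarith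
  exact le_of_mul_le_mul_left key hθ.1

lemma lipschitzWith_mul_norm (K : NNReal) : LipschitzWith K fun w : E ↦ (K : ℝ) * ‖w‖ :=
  LipschitzWith.of_le_add_mul K fun x y ↦ by
    rw [dist_eq_norm, ← mul_add]
    exact mul_le_mul_of_nonneg_left (norm_le_norm_add_norm_sub' x y) K.coe_nonneg

/-- The truncation is the Pasch–Hausdorff envelope `⨅ y, f y + K ‖x - y‖`, which coincides with `f`
wherever `f` already has slope at most `K` towards every other point. -/
lemma ConvexOn.exists_lipschitzWith_eqOn_closedBall [NormedSpace ℝ E] [FiniteDimensional ℝ E]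
    (hf : ConvexOn ℝ univ f) (R : ℝ) :
    ∃ (K : NNReal) (F : E → ℝ), ConvexOn ℝ univ F ∧ LipschitzWith K F ∧
      EqOn F f (closedBall 0 R) := by
  set r := |R| + 1
  obtain ⟨K, hK⟩ := (hf.locallyLipschitz.locallyLipschitzOn (s := closedBall (0 : E) r))
    |>.exists_lipschitzOnWith_of_compact (isCompact_closedBall 0 r)
  have hgrowth : ∀ x ∈ ball (0 : E) r, ∀ y, f x ≤ f y + K * ‖x - y‖ := fun x hx ↦
    hf.le_add_mul_norm_of_lipschitzOnWith (closedBall_mem_nhds_of_mem hx) hK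
  have hbdd : ∀ x : E, BddBelow (range fun y ↦ f y + K * ‖x - y‖) := by
    refine fun x ↦ ⟨f 0 - K * ‖x‖, ?_⟩
    rintro _ ⟨y, rfl⟩
    have h0 := hgrowth 0 (mem_ball_self (by positivity)) y
    have := mul_le_mul_of_nonneg_left (norm_le_norm_add_norm_sub' y x) K.coe_nonneg
    rw [zero_sub, norm_neg] at h0
    rw [norm_sub_rev] at this
    change f 0 - K * ‖x‖ ≤ f y + K * ‖x - y‖
    linarith
  refine ⟨K, infConv f fun w ↦ K * ‖w‖,
    convexOn_infConv hf ((convexOn_norm convex_univ).smul K.coe_nonneg) hbdd,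
    lipschitzWith_infConv_of_right (lipschitzWith_mul_norm K) hbdd, fun x hx ↦ ?_⟩
  have hxr : x ∈ ball (0 : E) r := by
    rw [mem_closedBall, dist_zero_right] at hx
    rw [mem_ball, dist_zero_right]
    linarith [le_abs_self R]
  refine le_antisymm ?_ (le_infConv (hgrowth x hxr))
  simpa using infConv_le (ρ := fun w ↦ K * ‖w‖) (hbdd x) x

end Truncation

section QuadraticTaylorBounds

variable {E : Type*} [NormedAddCommGroup E] [NormedSpace ℝ E] {g : E → ℝ} {a : ℝ}

/-- The lower bound comes from midpoint convexity between `x + w` and `x - w`. -/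
lemma ConvexOn.abs_sub_sub_le_of_le_add (hg : ConvexOn ℝ univ g) {x : E} {ℓ : E →L[ℝ] ℝ}
    (h : ∀ w, g (x + w) ≤ g x + ℓ w + a * ‖w‖ ^ 2) (w : E) :
    |g (x + w) - g x - ℓ w| ≤ a * ‖w‖ ^ 2 := by
  have hmid : g x ≤ 1 / 2 * g (x + w) + 1 / 2 * g (x + -w) := by
    have := hg.2 (mem_univ (x + w)) (mem_univ (x + -w)) (by norm_num) (by norm_num)
      (add_halves 1)
    rwa [show (1 / 2 : ℝ) • (x + w) + (1 / 2 : ℝ) • (x + -w) = x by module, smul_eq_mul,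
      smul_eq_mul] at this
  have hneg := h (-w)
  rw [map_neg, norm_neg] at hneg
  rw [abs_le]
  constructor <;> linarith [h w]

lemma hasFDerivAt_of_abs_sub_sub_le {x : E} {ℓ : E →L[ℝ] ℝ}
    (h : ∀ w, |g (x + w) - g x - ℓ w| ≤ a * ‖w‖ ^ 2) : HasFDerivAt g ℓ x := by
  rw [hasFDerivAt_iff_isLittleO_nhds_zero]
  refine (Asymptotics.IsBigO.of_bound a (Eventually.of_forall fun w ↦ ?_)).trans_isLittleO
    (Asymptotics.isLittleO_norm_pow_id one_lt_two)
  rw [Real.norm_eq_abs, norm_pow, norm_norm]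
  exact h w

/-- Comparing the Taylor bounds at `x` and at `y = x + d` along a step `v` with `‖v‖ = ‖d‖`
bounds `(ℓ y - ℓ x) v` by `6 a ‖d‖²`. -/
lemma lipschitzWith_of_abs_sub_sub_le (ha : 0 ≤ a) {ℓ : E → E →L[ℝ] ℝ}
    (h : ∀ x w, |g (x + w) - g x - ℓ x w| ≤ a * ‖w‖ ^ 2) :
    LipschitzWith (6 * a).toNNReal ℓ := by
  refine LipschitzWith.of_dist_le_mul fun y x ↦ ?_
  rw [dist_eq_norm, dist_eq_norm, Real.coe_toNNReal _ (by positivity)]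
  refine ContinuousLinearMap.opNorm_le_bound _ (by positivity) fun u ↦ ?_
  set d := y - x
  rcases eq_or_ne d 0 with hd | hd
  · rw [sub_eq_zero.1 hd, sub_self, zero_apply, norm_zero]
    positivity
  rcases eq_or_ne u 0 with rfl | hu
  · simp
  set t := ‖d‖ / ‖u‖
  have ht : 0 < t := div_pos (norm_pos_iff.2 hd) (norm_pos_iff.2 hu)
  have hv : ‖t • u‖ = ‖d‖ := by
    rw [norm_smul, Real.norm_of_nonneg ht.le, div_mul_cancel₀ _ (norm_ne_zero_iff.2 hu)]
  have hdv : ‖d + t • u‖ ≤ 2 * ‖d‖ := (norm_add_le _ _).trans (by rw [hv]; linarith)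
  have hA := h y (t • u)
  have hB := h x (d + t • u)
  have hC := h x d
  rw [show x + (d + t • u) = y + t • u by simp only [d]; abel, map_add] at hB
  rw [show x + d = y by simp only [d]; abel] at hC
  rw [hv] at hA
  have hB' : a * ‖d + t • u‖ ^ 2 ≤ a * (2 * ‖d‖) ^ 2 := by gcongr
  rw [map_smul, smul_eq_mul] at hA hB
  have key : |t * ℓ y u - t * ℓ x u| ≤ t * (6 * a * ‖d‖ * ‖u‖) := by
    have hdt : t * (6 * a * ‖d‖ * ‖u‖) = 6 * a * ‖d‖ ^ 2 := by
      simp only [t]; field_simp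
    rw [hdt]
    rw [abs_le] at hA hB hC ⊢
    constructor <;> nlinarith
  rw [← mul_sub, abs_mul, abs_of_pos ht] at key
  rw [Real.norm_eq_abs, sub_apply]
  exact le_of_mul_le_mul_left key ht

lemma ConvexOn.exists_hasFDerivAt_lipschitzWith (hg : ConvexOn ℝ univ g) (ha : 0 ≤ a)
    (h : ∀ x, ∃ ℓ : E →L[ℝ] ℝ, ∀ w, g (x + w) ≤ g x + ℓ w + a * ‖w‖ ^ 2) :
    ∃ ℓ : E → E →L[ℝ] ℝ, LipschitzWith (6 * a).toNNReal ℓ ∧ ∀ x, HasFDerivAt g (ℓ x) x := by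
  choose ℓ hℓ using h
  have htaylor x := hg.abs_sub_sub_le_of_le_add (hℓ x)
  exact ⟨ℓ, lipschitzWith_of_abs_sub_sub_le ha htaylor,
    fun x ↦ hasFDerivAt_of_abs_sub_sub_le (htaylor x)⟩

end QuadraticTaylorBounds

section LasryLions

open scoped RealInnerProductSpace

variable {E : Type*} [NormedAddCommGroup E] {h F : E → ℝ} {K : NNReal} {a : ℝ}

/-- Complete the square: `a r² - (K + c) r + (K + c)² / (4a) = (2a r - (K + c))² / (4a)`. -/
lemma LipschitzWith.add_mul_norm_sub_le (hh : LipschitzWith K h) (ha : 0 < a) (c : ℝ) (x y : E) :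
    h x + c * ‖x - y‖ - (K + c) ^ 2 / (4 * a) ≤ h y + a * ‖x - y‖ ^ 2 := by
  have hxy := hh.le_add_mul x y
  rw [dist_eq_norm] at hxy
  have hsq : 0 ≤ (2 * a * ‖x - y‖ - (K + c)) ^ 2 / (4 * a) := by positivity
  have hexp : (2 * a * ‖x - y‖ - (K + c)) ^ 2 / (4 * a)
      = a * ‖x - y‖ ^ 2 - (K + c) * ‖x - y‖ + (K + c) ^ 2 / (4 * a) := by
    field_simp
    ring
  linarith

lemma LipschitzWith.bddBelow_add_mul_norm_sq (hh : LipschitzWith K h) (ha : 0 < a) (x : E) :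
    BddBelow (range fun y ↦ h y + a * ‖x - y‖ ^ 2) := by
  refine ⟨h x - K ^ 2 / (4 * a), ?_⟩
  rintro _ ⟨y, rfl⟩
  simpa using hh.add_mul_norm_sub_le ha 0 x y

lemma LipschitzWith.exists_forall_add_mul_norm_sq_le [ProperSpace E] (hh : LipschitzWith K h)
    (ha : 0 < a) (x : E) : ∃ p, ∀ y, h p + a * ‖x - p‖ ^ 2 ≤ h y + a * ‖x - y‖ ^ 2 := by
  refine (hh.continuous.add (continuous_const.mul (by fun_prop))).exists_forall_le ?_
  set C := h x - ‖x‖ - (K + 1) ^ 2 / (4 * a)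
  have hlow : ∀ y, ‖y‖ + C ≤ h y + a * ‖x - y‖ ^ 2 := fun y ↦ by
    have := hh.add_mul_norm_sub_le ha 1 x y
    have hy := norm_le_norm_add_norm_sub' y x
    rw [norm_sub_rev] at hy
    linarith
  exact tendsto_atTop_mono hlow (tendsto_atTop_add_const_right _ C tendsto_norm_cocompact_atTop)

lemma convexOn_mul_norm_sq [NormedSpace ℝ E] (ha : 0 ≤ a) :
    ConvexOn ℝ univ fun w : E ↦ a * ‖w‖ ^ 2 :=
  ((convexOn_norm convex_univ).pow (fun _ _ ↦ norm_nonneg _) 2).smul ha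

/-- The Lasry–Lions regularisation of `F`: the inf-convolution with `a ‖·‖²` of the
sup-convolution `z ↦ ⨆ y, F y - a ‖z - y‖² = -infConv (-F) (a ‖·‖²) z`. -/
noncomputable def lasryLions (a : ℝ) (F : E → ℝ) : E → ℝ :=
  infConv (-infConv (-F) fun w ↦ a * ‖w‖ ^ 2) fun w ↦ a * ‖w‖ ^ 2

lemma LipschitzWith.neg_infConv_neg (hF : LipschitzWith K F) (ha : 0 < a) :
    LipschitzWith K (-infConv (-F) fun w ↦ a * ‖w‖ ^ 2) :=
  (lipschitzWith_infConv_of_left hF.neg (hF.neg.bddBelow_add_mul_norm_sq ha)).neg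

variable [InnerProductSpace ℝ E]

lemma LipschitzWith.exists_infConv_sq_le_add [ProperSpace E] (hh : LipschitzWith K h) (ha : 0 < a)
    (x : E) : ∃ ℓ : E →L[ℝ] ℝ, ∀ w, infConv h (fun v ↦ a * ‖v‖ ^ 2) (x + w) ≤
      infConv h (fun v ↦ a * ‖v‖ ^ 2) x + ℓ w + a * ‖w‖ ^ 2 := by
  obtain ⟨p, hp⟩ := hh.exists_forall_add_mul_norm_sq_le ha x
  have hbdd := hh.bddBelow_add_mul_norm_sq ha
  have hx : infConv h (fun v ↦ a * ‖v‖ ^ 2) x = h p + a * ‖x - p‖ ^ 2 :=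
    le_antisymm (infConv_le (ρ := fun v ↦ a * ‖v‖ ^ 2) (hbdd x) p) (le_infConv hp)
  refine ⟨(2 * a) • innerSL ℝ (x - p), fun w ↦ ?_⟩
  have hxw := infConv_le (ρ := fun v ↦ a * ‖v‖ ^ 2) (hbdd (x + w)) p
  rw [show x + w - p = (x - p) + w by abel, norm_add_sq_real] at hxw
  rw [hx, smul_apply, innerSL_apply_apply, smul_eq_mul]
  linarith

lemma convexOn_lasryLions (hF : ConvexOn ℝ univ F) (hL : LipschitzWith K F) (ha : 0 < a) :
    ConvexOn ℝ univ (lasryLions a F) :=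
  convexOn_infConv
    (concaveOn_infConv hF.neg (hL.neg.bddBelow_add_mul_norm_sq ha)).neg
    (convexOn_mul_norm_sq ha.le) ((hL.neg_infConv_neg ha).bddBelow_add_mul_norm_sq ha)

lemma exists_hasFDerivAt_lasryLions [ProperSpace E] (hF : ConvexOn ℝ univ F)
    (hL : LipschitzWith K F) (ha : 0 < a) :
    ∃ ℓ : E → E →L[ℝ] ℝ, LipschitzWith (6 * a).toNNReal ℓ ∧
      ∀ x, HasFDerivAt (lasryLions a F) (ℓ x) x :=
  (convexOn_lasryLions hF hL ha).exists_hasFDerivAt_lipschitzWith ha.le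
    ((hL.neg_infConv_neg ha).exists_infConv_sq_le_add ha)

/-- Writing `D = 2a ⟪u, ·⟫`, the sup-convolution is at least `F x + 2a ⟪u, z - x⟫ + a ‖u‖²` (test `y = z + u`) and at most `F x - a ‖u‖²` at
`z = x - u`. -/
lemma lasryLions_eq_of_le_of_le [CompleteSpace E] (hL : LipschitzWith K F) (ha : 0 < a) {x : E}
    {D : E →L[ℝ] ℝ} (hlow : ∀ y, F x + D (y - x) ≤ F y)
    (hup : ∀ y, F y ≤ F x + D (y - x) + a * ‖y - x‖ ^ 2) : lasryLions a F x = F x := by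
  set u : E := (2 * a)⁻¹ • (InnerProductSpace.toDual ℝ E).symm D
  have hD : ∀ v, D v = 2 * a * ⟪u, v⟫ := fun v ↦ by
    rw [real_inner_smul_left, InnerProductSpace.toDual_symm_apply, ← mul_assoc,
      mul_inv_cancel₀ (by positivity), one_mul]
  have hbddF := hL.neg.bddBelow_add_mul_norm_sq ha
  have hbddh := (hL.neg_infConv_neg ha).bddBelow_add_mul_norm_sq ha
  refine le_antisymm ?_ (le_infConv fun z ↦ ?_)
  · have hg := infConv_le (ρ := fun v ↦ a * ‖v‖ ^ 2) (hbddh x) (x - u)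
    have hh : F x - a * ‖u‖ ^ 2 ≥ -infConv (-F) (fun v ↦ a * ‖v‖ ^ 2) (x - u) := by
      refine neg_le.1 (le_infConv fun y ↦ ?_)
      have hy := hup y
      rw [hD] at hy
      have hsq : a * ‖(y - x) + u‖ ^ 2 = a * ‖y - x‖ ^ 2 + 2 * a * ⟪u, y - x⟫ + a * ‖u‖ ^ 2 := by
        rw [norm_add_sq_real, real_inner_comm]; ring
      rw [show x - u - y = -((y - x) + u) by abel, norm_neg]
      simp only [Pi.neg_apply]
      linarith
    simp only [lasryLions, sub_sub_cancel, Pi.neg_apply] at hg ⊢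
    linarith
  · have hh := infConv_le (ρ := fun v ↦ a * ‖v‖ ^ 2) (hbddF z) (z + u)
    have hz := hlow (z + u)
    rw [hD, show z + u - x = (z - x) + u by abel, inner_add_right, real_inner_self_eq_norm_sq] at hz
    have hsq : a * ‖(z - x) + u‖ ^ 2 = a * ‖z - x‖ ^ 2 + 2 * a * ⟪u, z - x⟫ + a * ‖u‖ ^ 2 := by
      rw [norm_add_sq_real, real_inner_comm]; ring
    have hnonneg : 0 ≤ a * ‖(z - x) + u‖ ^ 2 := by positivity
    rw [show z - (z + u) = -u by abel, norm_neg] at hh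
    rw [norm_sub_rev]
    simp only [Pi.neg_apply] at hh ⊢
    linarith

end LasryLions

section OneDim

variable {φ : ℝ → ℝ} {C : NNReal}

/-- Where the (monotone) right derivative `r` of `φ` is differentiable, `r (s + t) ≤ r s + c t`
for small `t`, so `φ (s + t) - φ s ≤ t r (s + t)` gives the bound; for large `t` the Lipschitz
bound takes over. -/
lemma ConvexOn.ae_le_add_rightDeriv_mul_add_sq (hφ : ConvexOn ℝ univ φ) (hL : LipschitzWith C φ) :
    ∀ᵐ s, ∃ m : ℝ, ∀ t, 0 ≤ t →
      φ (s + t) ≤ φ s + t * derivWithin φ (Ioi s) s + m * t ^ 2 := by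
  set r := fun s ↦ derivWithin φ (Ioi s) s
  have hmono : Monotone r := by simpa using hφ.monotoneOn_rightDeriv
  have hslope_le : ∀ s t, 0 < t → slope φ s (s + t) ≤ r (s + t) := fun s t ht ↦
    (hφ.slope_le_leftDeriv_of_mem_interior (mem_univ s) (by simp) (by linarith)).trans
      (hφ.leftDeriv_le_rightDeriv_of_mem_interior (by simp))
  have hlip : ∀ s t, 0 ≤ t → φ (s + t) - φ s ≤ C * t := fun s t ht ↦ by
    have := hL.le_add_mul (s + t) s
    rw [Real.dist_eq, add_sub_cancel_left, abs_of_nonneg ht] at this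
    linarith
  filter_upwards [hmono.ae_differentiableAt] with s hs
  obtain ⟨c, hc, hO⟩ := hs.hasDerivAt.isBigO_sub.exists_pos
  obtain ⟨δ, hδ, hball⟩ := Metric.eventually_nhds_iff_ball.1 hO.bound
  have hr : -C ≤ r s := by
    have h := hslope_le (s - 1) 1 one_pos
    rw [sub_add_cancel, slope_def_field, sub_sub_cancel, div_one] at h
    have hC := hL.le_add_mul (s - 1) s
    rw [Real.dist_eq, sub_sub_cancel_left, abs_neg, abs_one, mul_one] at hC
    linarith
  refine ⟨c + 2 * C / δ, fun t ht ↦ ?_⟩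
  rcases ht.eq_or_lt with rfl | ht
  · simp
  have hCδ : 0 ≤ 2 * C / δ * t ^ 2 := by positivity
  rcases lt_or_ge t δ with htδ | htδ
  · have hrt : r (s + t) ≤ r s + c * t := by
      have h := hball (s + t) (by rwa [mem_ball, Real.dist_eq, add_sub_cancel_left, abs_of_pos ht])
      rw [Real.norm_eq_abs, Real.norm_eq_abs, add_sub_cancel_left, abs_of_pos ht] at h
      linarith [le_abs_self (r (s + t) - r s)]
    have h := hslope_le s t ht
    rw [slope_def_field, add_sub_cancel_left, div_le_iff₀ ht] at h
    change φ (s + t) ≤ φ s + t * r s + (c + 2 * C / δ) * t ^ 2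
    nlinarith
  · have hlarge : 2 * C * t ≤ 2 * C / δ * t ^ 2 := by
      rw [div_mul_eq_mul_div, le_div_iff₀ hδ]
      nlinarith [mul_le_mul_of_nonneg_left htδ (by positivity : (0 : ℝ) ≤ 2 * C * t)]
    have := hlip s t ht.le
    change φ (s + t) ≤ φ s + t * r s + (c + 2 * C / δ) * t ^ 2
    nlinarith

end OneDim

section Lines

variable {E : Type*} [NormedAddCommGroup E] [NormedSpace ℝ E] [FiniteDimensional ℝ E]
  [MeasurableSpace E] [BorelSpace E] (μ : Measure E) [μ.IsAddHaarMeasure]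

/-- Fubini for `{(s, x) | x + s • v ∈ S} ⊆ [0, 1] × E`: its slices `s = const` are translates
of `S`, its slices `x = const` are null. -/
lemma measure_eq_zero_of_ae_notMem_line {S : Set E} (hS : MeasurableSet S) (v : E)
    (h : ∀ x, ∀ᵐ s : ℝ, x + s • v ∉ S) : μ S = 0 := by
  set ν := volume.restrict (Icc (0 : ℝ) 1)
  set T := (fun p : ℝ × E ↦ p.2 + p.1 • v) ⁻¹' S
  have hT : MeasurableSet T := (measurable_snd.add (measurable_fst.smul_const v)) hS
  have hμS : (ν.prod μ) T = μ S := by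
    rw [Measure.prod_apply hT]
    simp_rw [show ∀ s : ℝ, Prod.mk s ⁻¹' T = (· + s • v) ⁻¹' S from fun _ ↦ rfl,
      measure_preimage_add_right]
    simp [ν]
  have hzero : (ν.prod μ) T = 0 := by
    rw [Measure.prod_apply_symm hT]
    have hslice : ∀ x, ν ((fun s ↦ (s, x)) ⁻¹' T) = 0 := fun x ↦ by
      have := ae_restrict_of_ae (s := Icc (0 : ℝ) 1) (h x)
      simp only [ae_iff, not_not] at this
      exact this
    simp [hslice]
  rw [← hμS, hzero]

end Lines

lemma measurableSet_forall_nonneg {α : Type*} [MeasurableSpace α] {P : ℝ → α → Prop}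
    (hclosed : ∀ x, IsClosed {t | P t x}) (hmeas : ∀ t, MeasurableSet {x | P t x}) :
    MeasurableSet {x | ∀ t, 0 ≤ t → P t x} := by
  have hrat : {x | ∀ t, 0 ≤ t → P t x} = ⋂ q : ℚ, {x | P |(q : ℝ)| x} := by
    ext x
    simp only [mem_ofPred_eq, mem_iInter]
    refine ⟨fun h q ↦ h _ (abs_nonneg _), fun h t ht ↦ ?_⟩
    rw [← abs_of_nonneg ht]
    exact Rat.denseRange_cast.induction_on (p := fun t : ℝ ↦ P |t| x) t
      ((hclosed x).preimage continuous_abs) h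
  rw [hrat]
  exact .iInter fun q ↦ hmeas _

section RayBounds

variable {E : Type*} [NormedAddCommGroup E] [NormedSpace ℝ E] {F : E → ℝ} {v : E} {m m' : ℝ}

lemma ConvexOn.comp_line (hF : ConvexOn ℝ univ F) (x v : E) :
    ConvexOn ℝ univ fun s : ℝ ↦ F (x + s • v) := by
  have hline : (fun s : ℝ ↦ F (x + s • v)) = F ∘ AffineMap.lineMap x (x + v) := by
    funext s
    simp [AffineMap.lineMap_apply_module', add_comm]
  simpa [hline] using hF.comp_affineMap (AffineMap.lineMap x (x + v))

lemma HasFDerivAt.hasDerivAt_comp_line {D : E →L[ℝ] ℝ} {x : E} {s : ℝ}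
    (hF : HasFDerivAt F D (x + s • v)) : HasDerivAt (fun s : ℝ ↦ F (x + s • v)) (D v) s :=
  hF.comp_hasDerivAt s (by simpa using ((hasDerivAt_id s).smul_const v).const_add x)

lemma ConvexOn.add_fderiv_le (hF : ConvexOn ℝ univ F) {x : E} (hx : DifferentiableAt ℝ F x)
    (y : E) : F x + fderiv ℝ F x (y - x) ≤ F y := by
  have hx' : HasFDerivAt F (fderiv ℝ F x) (x + (0 : ℝ) • (y - x)) := by
    simpa using hx.hasFDerivAt
  have h := (hF.comp_line x (y - x)).le_slope_of_hasDerivAt (mem_univ 0) (mem_univ 1) one_pos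
    hx'.hasDerivAt_comp_line
  rw [slope_def_field] at h
  simp only [zero_smul, add_zero, one_smul, add_sub_cancel, sub_zero, div_one] at h
  linarith

def rayQuadBound (F : E → ℝ) (v : E) (m : ℝ) : Set E :=
  {x | ∀ t : ℝ, 0 ≤ t → F (x + t • v) ≤ F x + t * fderiv ℝ F x v + m * t ^ 2}

lemma rayQuadBound_mono (h : m ≤ m') : rayQuadBound F v m ⊆ rayQuadBound F v m' :=
  fun _ hx t ht ↦ (hx t ht).trans (by gcongr)

lemma measurableSet_rayQuadBound [MeasurableSpace E] [BorelSpace E] (hF : Continuous F) :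
    MeasurableSet (rayQuadBound F v m) := by
  refine measurableSet_forall_nonneg (fun x ↦ isClosed_le (by fun_prop) (by fun_prop))
    fun t ↦ measurableSet_le ?_ ?_
  · exact (hF.comp (continuous_add_const (t • v))).measurable
  · exact (hF.measurable.add ((measurable_fderiv_apply_const ℝ F v).const_mul t)).add_const _

/-- On the line `s ↦ x + s • v`, the one-dimensional statement applies to `F`; at points of
differentiability its right derivative is `fderiv ℝ F _ v`. -/
lemma ConvexOn.ae_eventually_mem_rayQuadBound [FiniteDimensional ℝ E] [MeasurableSpace E]
    [BorelSpace E] (μ : Measure E) [μ.IsAddHaarMeasure] {K : NNReal}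
    (hF : ConvexOn ℝ univ F) (hL : LipschitzWith K F) (v : E) :
    ∀ᵐ x ∂μ, ∀ᶠ m : ℕ in atTop, x ∈ rayQuadBound F v m := by
  set S := {x | DifferentiableAt ℝ F x} \ ⋃ m : ℕ, rayQuadBound F v m
  have hS : MeasurableSet S := (measurableSet_of_differentiableAt ℝ F).diff
    (.iUnion fun _ ↦ measurableSet_rayQuadBound hL.continuous)
  have hnull : μ S = 0 := by
    refine measure_eq_zero_of_ae_notMem_line μ hS v fun x ↦ ?_
    have hφL : LipschitzWith (K * ‖v‖₊) fun s : ℝ ↦ F (x + s • v) :=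
      hL.comp <| LipschitzWith.of_dist_le_mul fun s s' ↦ by
        simp [dist_eq_norm, ← sub_smul, norm_smul, mul_comm]
    filter_upwards [(hF.comp_line x v).ae_le_add_rightDeriv_mul_add_sq hφL]
      with s ⟨m, hm⟩ ⟨hdiff, hnot⟩
    refine hnot (mem_iUnion.2 ⟨⌈m⌉₊, fun t ht ↦ ?_⟩)
    have h := hm t ht
    rw [(hdiff.hasFDerivAt.hasDerivAt_comp_line).hasDerivWithinAt.derivWithin
      (uniqueDiffWithinAt_Ioi s)] at h
    simp only [add_smul, ← add_assoc] at h
    have : m * t ^ 2 ≤ ⌈m⌉₊ * t ^ 2 := by gcongr; exact Nat.le_ceil m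
    linarith
  filter_upwards [hL.ae_differentiableAt (μ := μ), measure_eq_zero_iff_ae_notMem.1 hnull]
    with x hdiff hxS
  obtain ⟨m, hm⟩ := mem_iUnion.1 (not_not.1 fun h ↦ hxS ⟨hdiff, h⟩)
  exact eventually_atTop.2 ⟨m, fun m' hm' ↦ rayQuadBound_mono (Nat.cast_le.2 hm') hm⟩

end RayBounds

section CoordBounds

variable {E : Type*} [NormedAddCommGroup E] [InnerProductSpace ℝ E] {ι : Type*} [Fintype ι]
  {F : E → ℝ} {m : ℝ}

def coordQuadBound (F : E → ℝ) (b : OrthonormalBasis ι ℝ E) (m : ℝ) : Set E :=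
  {x | DifferentiableAt ℝ F x} ∩ ⋂ i, rayQuadBound F (b i) m ∩ rayQuadBound F (-b i) m

lemma coordQuadBound_mono (b : OrthonormalBasis ι ℝ E) : Monotone (coordQuadBound F b) :=
  fun _ _ h ↦ inter_subset_inter_right _ <|
    iInter_mono fun _ ↦ inter_subset_inter (rayQuadBound_mono h) (rayQuadBound_mono h)

lemma measurableSet_coordQuadBound [MeasurableSpace E] [BorelSpace E] (hF : Continuous F)
    (b : OrthonormalBasis ι ℝ E) : MeasurableSet (coordQuadBound F b m) :=
  (measurableSet_of_differentiableAt ℝ F).inter <|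
    .iInter fun _ ↦ (measurableSet_rayQuadBound hF).inter (measurableSet_rayQuadBound hF)

lemma ConvexOn.ae_eventually_mem_coordQuadBound [FiniteDimensional ℝ E] [MeasurableSpace E]
    [BorelSpace E] (μ : Measure E) [μ.IsAddHaarMeasure] {K : NNReal}
    (hF : ConvexOn ℝ univ F) (hL : LipschitzWith K F) (b : OrthonormalBasis ι ℝ E) :
    ∀ᵐ x ∂μ, ∀ᶠ m : ℕ in atTop, x ∈ coordQuadBound F b m := by
  have h i : ∀ᵐ x ∂μ, ∀ᶠ m : ℕ in atTop,
      x ∈ rayQuadBound F (b i) m ∩ rayQuadBound F (-b i) m := by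
    filter_upwards [hF.ae_eventually_mem_rayQuadBound μ hL (b i),
      hF.ae_eventually_mem_rayQuadBound μ hL (-b i)] with x h₁ h₂
    exact h₁.and h₂
  filter_upwards [hL.ae_differentiableAt (μ := μ), ae_all_iff.2 h] with x hdiff hx
  exact (eventually_all.2 hx).mono fun _ hm ↦ ⟨hdiff, mem_iInter.2 hm⟩

/-- Jensen's inequality for `y = ∑ i, N⁻¹ • (x + (N * cᵢ) • bᵢ)`, where `N = card ι` and `cᵢ`
are the coordinates of `y - x`, turns the bounds along the coordinate lines into a bound in
every direction. -/
lemma ConvexOn.le_add_fderiv_add_sq_of_mem_coordQuadBound (hF : ConvexOn ℝ univ F)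
    {b : OrthonormalBasis ι ℝ E} {x : E} (hx : x ∈ coordQuadBound F b m) (y : E) :
    F y ≤ F x + fderiv ℝ F x (y - x) + Fintype.card ι * m * ‖y - x‖ ^ 2 := by
  set D := fderiv ℝ F x
  have hline i (s : ℝ) : F (x + s • b i) ≤ F x + s * D (b i) + m * s ^ 2 := by
    obtain ⟨hpos, hneg⟩ := mem_iInter.1 hx.2 i
    rcases le_total 0 s with hs | hs
    · exact hpos s hs
    · simpa using hneg (-s) (neg_nonneg.2 hs)
  set u := y - x
  set c := fun i ↦ b.repr u i
  have hu : ∑ i, c i • b i = u := b.sum_repr u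
  rcases isEmpty_or_nonempty ι with hι | hι
  · have hu0 : u = 0 := by rw [← hu]; simp
    rw [hu0, map_zero, norm_zero, sub_eq_zero.1 hu0]
    simp
  set N : ℝ := (Fintype.card ι : ℝ)
  have hN : 0 < N := by simp [N, Fintype.card_pos]
  have hsum : ∑ i, N⁻¹ • (x + (N * c i) • b i) = y := by
    simp_rw [smul_add, smul_smul, Finset.sum_add_distrib, inv_mul_cancel_left₀ hN.ne', hu,
      Finset.sum_const, Finset.card_univ, ← Nat.cast_smul_eq_nsmul ℝ, smul_smul]
    rw [mul_inv_cancel₀ hN.ne', one_smul, add_sub_cancel]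
  have hjensen := hF.map_sum_le (t := Finset.univ) (w := fun _ ↦ N⁻¹)
    (p := fun i ↦ x + (N * c i) • b i) (fun _ _ ↦ by positivity)
    (by simp [N, hN.ne']) (fun _ _ ↦ mem_univ _)
  rw [hsum] at hjensen
  have hnorm : ‖u‖ ^ 2 = ∑ i, c i ^ 2 := by
    rw [← b.repr.norm_map, EuclideanSpace.norm_sq_eq]
    simp [c]
  have hD : D u = ∑ i, c i * D (b i) := by
    conv_lhs => rw [← hu]
    simp [map_sum]
  calc F y ≤ ∑ i, N⁻¹ • F (x + (N * c i) • b i) := hjensen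
    _ ≤ ∑ i, N⁻¹ * (F x + N * c i * D (b i) + m * (N * c i) ^ 2) :=
        Finset.sum_le_sum fun i _ ↦ by
          rw [smul_eq_mul]
          exact mul_le_mul_of_nonneg_left (hline i _) (by positivity)
    _ = ∑ i, (N⁻¹ * F x + c i * D (b i) + N * m * c i ^ 2) :=
        Finset.sum_congr rfl fun i _ ↦ by field_simp
    _ = F x + D u + N * m * ‖u‖ ^ 2 := by
        rw [Finset.sum_add_distrib, Finset.sum_add_distrib, Finset.sum_const, Finset.card_univ,
          hD, hnorm, Finset.mul_sum, nsmul_eq_mul, ← mul_assoc, mul_inv_cancel₀ hN.ne', one_mul]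

lemma ConvexOn.lasryLions_eq_of_mem_coordQuadBound [CompleteSpace E] {K : NNReal} {a : ℝ}
    (hF : ConvexOn ℝ univ F) (hL : LipschitzWith K F) {b : OrthonormalBasis ι ℝ E} {x : E}
    (hx : x ∈ coordQuadBound F b m) (ha : 0 < a) (hma : Fintype.card ι * m ≤ a) :
    lasryLions a F x = F x :=
  lasryLions_eq_of_le_of_le hL ha (hF.add_fderiv_le hx.1) fun y ↦
    (hF.le_add_fderiv_add_sq_of_mem_coordQuadBound hx y).trans (by gcongr)

lemma ConvexOn.exists_convexOn_lipschitzWith_fderiv_eqOn [ProperSpace E] {K : NNReal}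
    (hF : ConvexOn ℝ univ F) (hL : LipschitzWith K F) (b : OrthonormalBasis ι ℝ E) (m : ℝ) :
    ∃ g : E → ℝ, ConvexOn ℝ univ g ∧ Differentiable ℝ g ∧
      (∃ K' : NNReal, LipschitzWith K' (fderiv ℝ g)) ∧ EqOn g F (coordQuadBound F b m) := by
  set a := Fintype.card ι * |m| + 1
  have ha : 0 < a := by positivity
  have hma : Fintype.card ι * m ≤ a := by
    have := mul_le_mul_of_nonneg_left (le_abs_self m) (Nat.cast_nonneg (Fintype.card ι))
    linarith
  obtain ⟨ℓ, hℓ, hderiv⟩ := exists_hasFDerivAt_lasryLions hF hL ha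
  exact ⟨lasryLions a F, convexOn_lasryLions hF hL ha, fun x ↦ (hderiv x).differentiableAt,
    ⟨_, funext (fun x ↦ (hderiv x).fderiv) ▸ hℓ⟩,
    fun _ hx ↦ hF.lasryLions_eq_of_mem_coordQuadBound hL hx ha hma⟩

end CoordBounds

section MeasureSelection

open scoped ENNReal

lemma exists_measure_sdiff_lt {α : Type*} [MeasurableSpace α] {μ : Measure α} {s : ℕ → Set α}
    (hmono : Monotone s) (hmeas : ∀ n, MeasurableSet (s n)) (hcover : ∀ᵐ x ∂μ, ∃ n, x ∈ s n)
    {A : Set α} (hA : μ A ≠ ∞) {δ : ℝ≥0∞} (hδ : 0 < δ) : ∃ n, μ (A \ s n) < δ := by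
  set T := toMeasurable μ A
  have hlim : Tendsto (fun n ↦ μ (T \ s n)) atTop (𝓝 (μ (⋂ n, T \ s n))) :=
    tendsto_measure_iInter_atTop
      (fun n ↦ ((measurableSet_toMeasurable μ A).diff (hmeas n)).nullMeasurableSet)
      (fun _ _ h ↦ sdiff_subset_sdiff_right (hmono h))
      ⟨0, ((measure_mono sdiff_subset).trans_lt ((measure_toMeasurable A).trans_lt hA.lt_top)).ne⟩
  have hnull : μ (⋂ n, T \ s n) = 0 := by
    refine measure_mono_null (fun x hx ↦ ?_) (ae_iff.1 hcover)
    simp only [mem_iInter, Set.mem_sdiff] at hx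
    exact fun ⟨n, hn⟩ ↦ (hx n).2 hn
  rw [hnull] at hlim
  obtain ⟨n, hn⟩ := (hlim.eventually_lt_const hδ).exists
  exact ⟨n, (measure_mono (sdiff_subset_sdiff_left (subset_toMeasurable μ A))).trans_lt hn⟩

lemma exists_measure_sdiff_closedBall_lt {E : Type*} [NormedAddCommGroup E] [MeasurableSpace E]
    [OpensMeasurableSpace E] {μ : Measure E} {A : Set E} (hA : μ A ≠ ∞) {δ : ℝ≥0∞}
    (hδ : 0 < δ) : ∃ R : ℕ, μ (A \ closedBall 0 R) < δ :=
  exists_measure_sdiff_lt (s := fun k : ℕ ↦ closedBall 0 (k : ℝ))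
    (fun _ _ h ↦ closedBall_subset_closedBall (Nat.cast_le.2 h)) (fun _ ↦ measurableSet_closedBall)
    (ae_of_all _ fun x ↦ (exists_nat_ge ‖x‖).imp fun _ ↦ mem_closedBall_zero_iff.2) hA hδ

end MeasureSelection

theorem lusin_stmt_14_general {n : ℕ} (f : EuclideanSpace ℝ (Fin n) → ℝ)
    (hf : ConvexOn ℝ Set.univ f)
    (A : Set (EuclideanSpace ℝ (Fin n))) (hAfin : volume A < ⊤)
    (ε : ℝ) (hε : 0 < ε) :
    ∃ g : EuclideanSpace ℝ (Fin n) → ℝ, ConvexOn ℝ Set.univ g ∧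
      Differentiable ℝ g ∧ (∃ K : NNReal, LipschitzWith K (fderiv ℝ g)) ∧
      volume {x ∈ A | f x ≠ g x} < ENNReal.ofReal ε := by
  have hε₂ : 0 < ENNReal.ofReal (ε / 2) := ENNReal.ofReal_pos.2 (half_pos hε)
  obtain ⟨R, hR⟩ := exists_measure_sdiff_closedBall_lt hAfin.ne hε₂
  obtain ⟨K, F, hFconv, hFlip, hFf⟩ := hf.exists_lipschitzWith_eqOn_closedBall (R : ℝ)
  set b := EuclideanSpace.basisFun (Fin n) ℝ
  obtain ⟨m, hm⟩ := exists_measure_sdiff_lt (s := fun m : ℕ ↦ coordQuadBound F b m)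
    (fun _ _ h ↦ coordQuadBound_mono b (Nat.cast_le.2 h))
    (fun _ ↦ measurableSet_coordQuadBound hFlip.continuous b)
    ((hFconv.ae_eventually_mem_coordQuadBound volume hFlip b).mono fun _ h ↦ h.exists)
    ((measure_mono inter_subset_left).trans_lt hAfin).ne hε₂ (A := A ∩ closedBall 0 R)
  obtain ⟨g, hgconv, hgdiff, hglip, hgF⟩ :=
    hFconv.exists_convexOn_lipschitzWith_fderiv_eqOn hFlip b m
  refine ⟨g, hgconv, hgdiff, hglip, ?_⟩
  have hsub : {x ∈ A | f x ≠ g x} ⊆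
      (A \ closedBall 0 R) ∪ ((A ∩ closedBall 0 R) \ coordQuadBound F b m) := by
    rintro x ⟨hxA, hfx⟩
    by_cases hxB : x ∈ closedBall 0 (R : ℝ)
    · exact .inr ⟨⟨hxA, hxB⟩, fun hxG ↦ hfx ((hFf hxB).symm.trans (hgF hxG).symm)⟩
    · exact .inl ⟨hxA, hxB⟩
  calc volume {x ∈ A | f x ≠ g x}
      ≤ volume (A \ closedBall 0 R) + volume ((A ∩ closedBall 0 R) \ coordQuadBound F b m) :=
        (measure_mono hsub).trans (measure_union_le _ _)
    _ < ENNReal.ofReal (ε / 2) + ENNReal.ofReal (ε / 2) := ENNReal.add_lt_add hR hm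
    _ = ENNReal.ofReal ε := by rw [← ENNReal.ofReal_add (by positivity) (by positivity), add_halves]

/-- every convex function on `ℝⁿ` agrees, off a subset of `A` of measure
less than `ε`, with a convex `C^{1,1}` function. -/
theorem lusin_stmt_14 {n : ℕ} (f : EuclideanSpace ℝ (Fin n) → ℝ)
    (hf : ConvexOn ℝ Set.univ f)
    (A : Set (EuclideanSpace ℝ (Fin n))) (hA : MeasurableSet A) (hAfin : volume A < ⊤)
    (ε : ℝ) (hε : 0 < ε) :
    ∃ g : EuclideanSpace ℝ (Fin n) → ℝ, ConvexOn ℝ Set.univ g ∧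
      Differentiable ℝ g ∧ (∃ K : NNReal, LipschitzWith K (fderiv ℝ g)) ∧
      volume {x ∈ A | f x ≠ g x} < ENNReal.ofReal ε :=
  lusin_stmt_14_general f hf A hAfin ε hε
end

section
/- Let f : ℝⁿ → ℝ be convex and differentiable almost everywhere, let C ⊆ ℝⁿ be measurable with 𝓛ⁿ(ℝⁿ \ C) < ∞, and suppose there is a unit vector v with ⟨∇g(x), v⟩ = 0 for all x ∈ C, where g(x) = f(x) − f(y₀) − ⟨∇f(y₀), x − y₀⟩ for some fixed y₀ ∈ C at which f is differentiable. Then g is constant along some line parallel to v; in particular f is not essentially coercive. -/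
/-!
Restricted to a line in direction `v`, the convex function `g` becomes a convex function `φ`
of one real variable. Since `Cᶜ` and the non-differentiability set of `f` have finite total
measure, Fubini along a complement of `ℝ v` gives a line on which `φ' = 0` off a set of finite
length. Every critical point of a convex function is a global minimiser, and the minimisers form
an interval; an interval whose complement has finite length is all of `ℝ`, so `φ` is constant.
On that line `f` is affine, and so is `f - ℓ` for every linear `ℓ`, which therefore cannot tend
to `+∞` in both directions.
-/

open Set MeasureTheory Filter Bornology

theorem ConvexOn.convex_setOf_isMinOn {𝕜 E β : Type*} [Field 𝕜] [LinearOrder 𝕜]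
    [IsStrictOrderedRing 𝕜] [AddCommGroup E] [Module 𝕜 E] [AddCommGroup β] [LinearOrder β]
    [IsOrderedAddMonoid β] [Module 𝕜 β] [IsStrictOrderedModule 𝕜 β] {s : Set E}
    {f : E → β} (hf : ConvexOn 𝕜 s f) : Convex 𝕜 {x ∈ s | IsMinOn f s x} := by
  intro a ha b hb t u ht hu htu
  refine ⟨hf.1 ha.1 hb.1 ht hu htu, fun y hy => ?_⟩
  calc f (t • a + u • b) ≤ max (f a) (f b) :=
        hf.le_max_of_mem_segment ha.1 hb.1 ⟨t, u, ht, hu, htu, rfl⟩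
    _ ≤ f y := max_le (ha.2 hy) (hb.2 hy)

theorem ConvexOn.comp_add_smul {𝕜 E β : Type*} [Semiring 𝕜] [PartialOrder 𝕜]
    [AddCommMonoid E] [Module 𝕜 E] [AddCommMonoid β] [PartialOrder β] [SMul 𝕜 β] {g : E → β} (hg : ConvexOn 𝕜 univ g) (x v : E) :
    ConvexOn 𝕜 univ fun t : 𝕜 => g (x + t • v) :=
  (hg.translate_right x).comp_linearMap (LinearMap.toSpanSingleton 𝕜 E v)

theorem ConvexOn.isMinOn_of_hasDerivAt_eq_zero {φ : ℝ → ℝ} {S : Set ℝ} {x : ℝ}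
    (hφ : ConvexOn ℝ S φ) (hx : x ∈ interior S) (hd : HasDerivAt φ 0 x) : IsMinOn φ S x :=
  hφ.isMinOn_of_rightDeriv_eq_zero hx (hd.hasDerivWithinAt.derivWithin (uniqueDiffWithinAt_Ioi x))

theorem Convex.eq_univ_of_volume_compl_ne_top {M : Set ℝ} (hM : Convex ℝ M)
    (h : volume Mᶜ ≠ ⊤) : M = univ := by
  refine eq_univ_of_forall fun t => ?_
  have meets : ∀ I : Set ℝ, volume I = ⊤ → ∃ s ∈ M, s ∈ I := fun I hI => by
    by_contra! hIM
    exact h (top_unique (hI ▸ measure_mono fun s hs hsM => hIM s hsM hs))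
  obtain ⟨a, haM, hat⟩ := meets (Iic t) Real.volume_Iic
  obtain ⟨b, hbM, htb⟩ := meets (Ici t) Real.volume_Ici
  exact hM.ordConnected.out haM hbM ⟨hat, htb⟩

theorem ConvexOn.eq_of_hasDerivAt_eq_zero_of_volume_compl_ne_top {φ : ℝ → ℝ}
    (hφ : ConvexOn ℝ univ φ) {S : Set ℝ} (hS : volume Sᶜ ≠ ⊤)
    (hd : ∀ s ∈ S, HasDerivAt φ 0 s) (t u : ℝ) : φ t = φ u := by
  have hSmin : S ⊆ {s ∈ univ | IsMinOn φ univ s} := fun s hs =>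
    ⟨mem_univ s, hφ.isMinOn_of_hasDerivAt_eq_zero (by simp) (hd s hs)⟩
  have hmin := hφ.convex_setOf_isMinOn.eq_univ_of_volume_compl_ne_top
    (ne_top_of_le_ne_top hS (measure_mono (compl_subset_compl.2 hSmin)))
  have hmin' : ∀ s, IsMinOn φ univ s := fun s => (eq_univ_iff_forall.1 hmin s).2
  exact le_antisymm (hmin' t (mem_univ u)) (hmin' u (mem_univ t))

section NormedSpace

variable {E : Type*} [NormedAddCommGroup E] [NormedSpace ℝ E]

theorem not_tendsto_cobounded_atTop_of_add_sub_smul {h : E → ℝ} {x v : E} (hv : v ≠ 0)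
    (hmid : ∀ t : ℝ, h (x + t • v) + h (x - t • v) = 2 * h x) :
    ¬Tendsto h (cobounded E) atTop := by
  intro hh
  have hsmul : Tendsto (fun t : ℝ => t • v) (cobounded ℝ) (cobounded E) := by
    rw [← tendsto_norm_atTop_iff_cobounded]
    simp_rw [norm_smul]
    exact tendsto_norm_cobounded_atTop.atTop_mul_const (norm_pos_iff.2 hv)
  have hplus := hh.comp ((tendsto_const_add_cobounded x).comp hsmul)
  have hminus := hh.comp ((tendsto_const_sub_cobounded x).comp hsmul)
  refine not_tendsto_const_atTop (2 * h x) (cobounded ℝ) ?_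
  simpa only [Function.comp_def, hmid] using hplus.atTop_add_atTop hminus

variable [FiniteDimensional ℝ E] [MeasurableSpace E] [BorelSpace E]
  (μ : Measure E) [μ.IsAddHaarMeasure]

theorem exists_volume_setOf_add_smul_mem_lt_top {v : E} (hv : v ≠ 0) {B : Set E}
    (hB : μ B ≠ ⊤) : ∃ x, volume {t : ℝ | x + t • v ∈ B} < ⊤ := by
  obtain ⟨K, hK⟩ := (ℝ ∙ v).exists_isCompl
  let Φ : (K × ℝ) ≃L[ℝ] E :=
    (((LinearEquiv.refl ℝ K).prodCongr (LinearEquiv.toSpanNonzeroSingleton ℝ E v hv)).trans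
      (Submodule.prodEquivOfIsCompl K (ℝ ∙ v) hK.symm)).toContinuousLinearEquiv
  have hΦ : ∀ (y : K) (t : ℝ), Φ (y, t) = y + t • v := fun y t => by simp [Φ]
  let ν : Measure (K × ℝ) := (Measure.addHaar : Measure K).prod volume
  have hmap : ν.map Φ = (ν.map Φ).addHaarScalarFactor μ • μ :=
    Measure.isAddLeftInvariant_eq_smul _ _
  have hν : ν (Φ ⁻¹' toMeasurable μ B) ≠ ⊤ := by
    rw [← Measure.map_apply Φ.continuous.measurable (measurableSet_toMeasurable μ B), hmap,
      Measure.smul_apply, measure_toMeasurable, ENNReal.smul_def, smul_eq_mul]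
    exact ENNReal.mul_ne_top ENNReal.coe_ne_top hB
  obtain ⟨y, hy⟩ := (Measure.ae_measure_lt_top
    ((measurableSet_toMeasurable μ B).preimage Φ.continuous.measurable) hν).exists
  refine ⟨y, (measure_mono fun t ht => ?_).trans_lt hy⟩
  simp only [mem_preimage, hΦ]
  exact subset_toMeasurable μ B ht

theorem ConvexOn.exists_forall_add_smul_eq {g : E → ℝ} (hg : ConvexOn ℝ univ g) {v : E}
    (hv : v ≠ 0) {C : Set E} (hC : μ Cᶜ ≠ ⊤)
    (hdir : ∀ y ∈ C, HasLineDerivAt ℝ g 0 y v) :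
    ∃ x, ∀ t : ℝ, g (x + t • v) = g x := by
  obtain ⟨x, hx⟩ := exists_volume_setOf_add_smul_mem_lt_top μ hv hC
  suffices hconst : ∀ t u : ℝ, g (x + t • v) = g (x + u • v) from
    ⟨x, fun t => by simpa using hconst t 0⟩
  refine (hg.comp_add_smul x v).eq_of_hasDerivAt_eq_zero_of_volume_compl_ne_top
    (S := (fun t : ℝ => x + t • v) ⁻¹' C) hx.ne fun s hs => ?_
  have hshift := HasDerivAt.comp_add_const s (-s) (f := fun t => g (x + s • v + t • v))
    (by rw [add_neg_cancel]; exact hdir _ hs)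
  refine hshift.congr_of_eventuallyEq (Eventually.of_forall fun t => ?_)
  dsimp only
  congr 1
  module

end NormedSpace

theorem lusin_stmt_18_general {n : ℕ} (f : EuclideanSpace ℝ (Fin n) → ℝ)
    (hf : ConvexOn ℝ Set.univ f)
    (hdae : ∀ᵐ x ∂(volume : Measure (EuclideanSpace ℝ (Fin n))), DifferentiableAt ℝ f x)
    (C : Set (EuclideanSpace ℝ (Fin n)))
    (hCfin : volume (Set.univ \ C) < ⊤)
    (y₀ : EuclideanSpace ℝ (Fin n))
    (g : EuclideanSpace ℝ (Fin n) → ℝ)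
    (hgdef : ∀ x, g x = f x - f y₀ - (inner ℝ (gradient f y₀) (x - y₀) : ℝ))
    (v : EuclideanSpace ℝ (Fin n)) (hv : ‖v‖ = 1)
    (hdir : ∀ x ∈ C, DifferentiableAt ℝ g x → fderiv ℝ g x v = 0) :
    (∃ x : EuclideanSpace ℝ (Fin n), ∀ t : ℝ, g (x + t • v) = g x) ∧
      ¬ ∃ ℓ : EuclideanSpace ℝ (Fin n) →ₗ[ℝ] ℝ,
        Tendsto (fun x => f x - ℓ x) (cobounded (EuclideanSpace ℝ (Fin n))) atTop := by
  set w := gradient f y₀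
  have hv0 : v ≠ 0 := norm_ne_zero_iff.mp (by simp [hv])
  have hg : g = f - fun x => inner ℝ w x + (f y₀ - inner ℝ w y₀) := by
    ext x
    simp only [hgdef, Pi.sub_apply, inner_sub_right]
    ring
  have hgc : ConvexOn ℝ univ g :=
    hg ▸ hf.sub (((innerₛₗ ℝ w).concaveOn convex_univ).add_const _)
  have hgd : ∀ x, DifferentiableAt ℝ f x → DifferentiableAt ℝ g x := fun x hx =>
    hg ▸ hx.sub ((differentiableAt_const w).inner ℝ differentiableAt_id |>.add_const _)
  have hCD : volume (C ∩ {x | DifferentiableAt ℝ f x})ᶜ ≠ ⊤ := by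
    refine ne_top_of_le_ne_top ?_
      ((measure_mono (compl_inter _ _).le).trans (measure_union_le _ _))
    rw [compl_ofPred, ae_iff.mp hdae, add_zero, compl_eq_univ_sdiff]
    exact hCfin.ne
  obtain ⟨x, hline⟩ := hgc.exists_forall_add_smul_eq volume hv0 hCD fun y hy =>
    hdir y hy.1 (hgd y hy.2) ▸ (hgd y hy.2).hasFDerivAt.hasLineDerivAt v
  refine ⟨⟨x, hline⟩, fun ⟨ℓ, hℓ⟩ =>
    not_tendsto_cobounded_atTop_of_add_sub_smul (x := x) hv0 (fun t => ?_) hℓ⟩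
  -- `f - ℓ` is `g` plus an affine function, hence affine on the line through `x`.
  have h₁ := hline t
  have h₂ := hline (-t)
  rw [neg_smul, ← sub_eq_add_neg] at h₂
  rw [hgdef, hgdef] at h₁ h₂
  simp only [add_sub_right_comm x, sub_sub_eq_add_sub, inner_add_right, inner_sub_right,
    inner_smul_right, map_add, map_sub, map_smul, smul_eq_mul] at h₁ h₂ ⊢
  linarith

/-- if the directional derivative of `g` in a direction `v` vanishes on a
set `C` of cofinite measure, then `g` is constant along some line parallel to `v`, and
in particular `f` is not essentially coercive. -/
theorem lusin_stmt_18 {n : ℕ} (f : EuclideanSpace ℝ (Fin n) → ℝ)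
    (hf : ConvexOn ℝ Set.univ f)
    (hdae : ∀ᵐ x ∂(volume : Measure (EuclideanSpace ℝ (Fin n))), DifferentiableAt ℝ f x)
    (C : Set (EuclideanSpace ℝ (Fin n))) (hC : MeasurableSet C)
    (hCfin : volume (Set.univ \ C) < ⊤)
    (y₀ : EuclideanSpace ℝ (Fin n)) (hy₀ : y₀ ∈ C) (hdy₀ : DifferentiableAt ℝ f y₀)
    (g : EuclideanSpace ℝ (Fin n) → ℝ)
    (hgdef : ∀ x, g x = f x - f y₀ - (inner ℝ (gradient f y₀) (x - y₀) : ℝ))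
    (v : EuclideanSpace ℝ (Fin n)) (hv : ‖v‖ = 1)
    (hdir : ∀ x ∈ C, DifferentiableAt ℝ g x → fderiv ℝ g x v = 0) :
    (∃ x : EuclideanSpace ℝ (Fin n), ∀ t : ℝ, g (x + t • v) = g x) ∧
      ¬ ∃ ℓ : EuclideanSpace ℝ (Fin n) →ₗ[ℝ] ℝ,
        Tendsto (fun x => f x - ℓ x) (cobounded (EuclideanSpace ℝ (Fin n))) atTop :=
  lusin_stmt_18_general f hf hdae C hCfin y₀ g hgdef v hv hdir
end
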